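/- arXiv:1305.6425 — 9 statements merged into one kernel-verified Lean document; each statement's English description precedes it below -/
import Mathlib

section
/- Let K be a field and let A₁, A₂, B₁, B₂ be K-vector spaces with linear maps u : A₁ → A₂, a : A₂ → B₁ and b : B₁ → B₂. Assume that the ranks (dimensions of the images) of a, a ∘ u, b ∘ a and b ∘ a ∘ u are all finite. Then rank(a) − rank(a ∘ u) ≥ rank(b ∘ a) − rank(b ∘ a ∘ u), as an inequality of integers. (This is the linear-algebra content of the Multidimensional Jump Monotonicity Lemma: in persistence, the four maps are the homomorphisms induced by inclusions of sublevel sets, and the inequality says that the number of independent homology classes born between u¹ and u² and still alive at v¹ is at least the number of those still alive at v².) -/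
open Module LinearMap

/-- Multidimensional Jump Monotonicity Lemma (linear-algebra content):
if `u : A₁ → A₂`, `a : A₂ → B₁`, `b : B₁ → B₂` are linear maps with the ranks of
`a`, `a ∘ u`, `b ∘ a`, `b ∘ a ∘ u` all finite, then
`rank a − rank (a ∘ u) ≥ rank (b ∘ a) − rank (b ∘ a ∘ u)` as integers. -/
theorem jump_monotonicity_linear_algebra
    {K : Type*} [Field K]
    {A₁ A₂ B₁ B₂ : Type*}
    [AddCommGroup A₁] [Module K A₁] [AddCommGroup A₂] [Module K A₂]
    [AddCommGroup B₁] [Module K B₁] [AddCommGroup B₂] [Module K B₂]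
    (u : A₁ →ₗ[K] A₂) (a : A₂ →ₗ[K] B₁) (b : B₁ →ₗ[K] B₂)
    [FiniteDimensional K (LinearMap.range a)]
    [FiniteDimensional K (LinearMap.range (a ∘ₗ u))]
    [FiniteDimensional K (LinearMap.range (b ∘ₗ a))]
    [FiniteDimensional K (LinearMap.range ((b ∘ₗ a) ∘ₗ u))] :
    (finrank K (LinearMap.range (b ∘ₗ a)) : ℤ) - finrank K (LinearMap.range ((b ∘ₗ a) ∘ₗ u))
      ≤ (finrank K (LinearMap.range a) : ℤ) - finrank K (LinearMap.range (a ∘ₗ u)) := by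
  set V := LinearMap.range a with hV
  set W := LinearMap.range (a ∘ₗ u) with hW
  have hWV : W ≤ V := LinearMap.range_comp_le_range u a
  set f : V →ₗ[K] B₂ := b ∘ₗ V.subtype with hf
  set g : W →ₗ[K] B₂ := b ∘ₗ W.subtype with hg
  -- ranges
  have hrf : LinearMap.range f = LinearMap.range (b ∘ₗ a) := by
    rw [hf, LinearMap.range_comp, Submodule.range_subtype, hV, ← LinearMap.range_comp]
  have hrg : LinearMap.range g = LinearMap.range ((b ∘ₗ a) ∘ₗ u) := by
    rw [hg, LinearMap.range_comp, Submodule.range_subtype, hW,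
      LinearMap.comp_assoc, ← LinearMap.range_comp]
  -- rank-nullity
  have h1 : finrank K (LinearMap.range f) + finrank K (LinearMap.ker f) = finrank K V :=
    LinearMap.finrank_range_add_finrank_ker f
  have h2 : finrank K (LinearMap.range g) + finrank K (LinearMap.ker g) = finrank K W :=
    LinearMap.finrank_range_add_finrank_ker g
  -- ker g injects into ker f
  have hker : finrank K (LinearMap.ker g) ≤ finrank K (LinearMap.ker f) := by
    set φ : LinearMap.ker g →ₗ[K] LinearMap.ker f :=
      LinearMap.codRestrict (LinearMap.ker f)
        ((Submodule.inclusion hWV) ∘ₗ (LinearMap.ker g).subtype)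
        (by
          rintro ⟨x, hx⟩
          simp only [LinearMap.mem_ker, hf, LinearMap.comp_apply] at hx ⊢
          simpa [hg] using hx) with hφ
    have hinj : Function.Injective φ := by
      intro x y hxy
      have := congrArg (Subtype.val ∘ Subtype.val) hxy
      ext
      simpa [hφ, LinearMap.codRestrict, Submodule.inclusion] using this
    exact LinearMap.finrank_le_finrank_of_injective hinj
  rw [← hrf, ← hrg]
  have hVW : finrank K W ≤ finrank K V := Submodule.finrank_mono hWV
  omega
end

section
/- Let β : ℝⁿ×ℝⁿ → ℕ be any function and let p ∈ D_n⁺ be a discontinuity point of the restriction of β to D_n⁺. Then every neighborhood of p in D_n⁺ contains a point (u,v) ∈ D_n⁺ such that either u is a discontinuity point of the partial function β(·,v) or v is a discontinuity point of the partial function β(u,·). -/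
namespace PersistSpace

variable {n : ℕ}

/-- `u ≼ v` : componentwise ≤ -/
def vle (u v : Fin n → ℝ) : Prop := ∀ i, u i ≤ v i

/-- `u ≺ v` : componentwise < -/
def vlt (u v : Fin n → ℝ) : Prop := ∀ i, u i < v i

/-- `D_n⁺ = {(u,v) : u ≺ v}` -/
def Dplus (n : ℕ) : Set ((Fin n → ℝ) × (Fin n → ℝ)) := {p | vlt p.1 p.2}

/-- Monotonicity: non-decreasing in `u`, non-increasing in `v`. -/
def Monot (β : (Fin n → ℝ) × (Fin n → ℝ) → ℕ) : Prop :=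
  (∀ u u' v : Fin n → ℝ, vle u u' → vlt u' v → β (u, v) ≤ β (u', v)) ∧
  (∀ u v v' : Fin n → ℝ, vlt u v → vle v v' → β (u, v') ≤ β (u, v))

/-- Jump Monotonicity. -/
def JumpMonot (β : (Fin n → ℝ) × (Fin n → ℝ) → ℕ) : Prop :=
  ∀ u1 u2 v1 v2 : Fin n → ℝ, vle u1 u2 → vlt u2 v1 → vle v1 v2 →
    (β (u2, v2) : ℤ) - β (u1, v2) ≤ (β (u2, v1) : ℤ) - β (u1, v1)

/-- Right-continuity in each variable separately. -/
def RightCont (β : (Fin n → ℝ) × (Fin n → ℝ) → ℕ) : Prop :=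
  ∀ u v : Fin n → ℝ, vlt u v → ∃ δ > (0:ℝ),
    (∀ u' : Fin n → ℝ, vle u u' → ‖u' - u‖ < δ → β (u', v) = β (u, v)) ∧
    (∀ v' : Fin n → ℝ, vle v v' → ‖v' - v‖ < δ → β (u, v') = β (u, v))

def Admissible (β : (Fin n → ℝ) × (Fin n → ℝ) → ℕ) : Prop :=
  Monot β ∧ JumpMonot β ∧ RightCont β

/-- Tameness: boundedness at infinity and vanishing below. -/
def Tame (β : (Fin n → ℝ) × (Fin n → ℝ) → ℕ) : Prop :=
  ∃ C > (0:ℝ),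
    (∀ u v v' : Fin n → ℝ, vlt u v → vlt u v' → (∀ i, C ≤ v i) → (∀ i, C ≤ v' i) →
      β (u, v) = β (u, v')) ∧
    (∀ u v : Fin n → ℝ, vlt u v → (∀ i, u i ≤ -C) → β (u, v) = 0)

/-- `μ_e(u,v)` -/
def muE (β : (Fin n → ℝ) × (Fin n → ℝ) → ℕ) (e u v : Fin n → ℝ) : ℤ :=
  (β (u + e, v - e) : ℤ) - β (u - e, v - e) - β (u + e, v + e) + β (u - e, v + e)

/-- Multiplicity `μ(u,v)`: infimum of `μ_e(u,v)` over admissible `e`. -/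
noncomputable def mult (β : (Fin n → ℝ) × (Fin n → ℝ) → ℕ) (u v : Fin n → ℝ) : ℤ :=
  sInf {m : ℤ | ∃ e : Fin n → ℝ, vlt 0 e ∧ vlt (u + e) (v - e) ∧ m = muE β e u v}

/-- `μ∞_{e,v}(u)` -/
def muInfE (β : (Fin n → ℝ) × (Fin n → ℝ) → ℕ) (e v u : Fin n → ℝ) : ℤ :=
  (β (u + e, v) : ℤ) - β (u - e, v)

/-- Multiplicity at infinity `μ∞(u)`. -/
noncomputable def multInf (β : (Fin n → ℝ) × (Fin n → ℝ) → ℕ) (u : Fin n → ℝ) : ℤ :=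
  sInf {m : ℤ | ∃ e v : Fin n → ℝ, vlt 0 e ∧ vlt (u + e) v ∧ m = muInfE β e v u}

/-- `u` is a discontinuity point of `β(·,v)` (ℕ discrete). -/
def DiscontAt1 (β : (Fin n → ℝ) × (Fin n → ℝ) → ℕ) (v u : Fin n → ℝ) : Prop :=
  ¬ ContinuousWithinAt (fun u' => β (u', v)) {u' | vlt u' v} u

/-- `v` is a discontinuity point of `β(u,·)` (ℕ discrete). -/
def DiscontAt2 (β : (Fin n → ℝ) × (Fin n → ℝ) → ℕ) (u v : Fin n → ℝ) : Prop :=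
  ¬ ContinuousWithinAt (fun v' => β (u, v')) {v' | vlt u v'} v

/-- `p` is a discontinuity point of `β` restricted to `D_n⁺`. -/
def DiscontPt (β : (Fin n → ℝ) × (Fin n → ℝ) → ℕ) (p : (Fin n → ℝ) × (Fin n → ℝ)) : Prop :=
  ¬ ContinuousWithinAt β (Dplus n) p

/-- `β` and `γ` are `η`-interleaved. -/
def Interleaved (β γ : (Fin n → ℝ) × (Fin n → ℝ) → ℕ) (η : ℝ) : Prop :=
  ∀ u v : Fin n → ℝ, vlt u v →
    β (u - (fun _ => η), v + (fun _ => η)) ≤ γ (u, v) ∧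
    γ (u - (fun _ => η), v + (fun _ => η)) ≤ β (u, v)

lemma isOpen_vlt_left (v : Fin n → ℝ) : IsOpen {u' : Fin n → ℝ | vlt u' v} := by
  have : {u' : Fin n → ℝ | vlt u' v} = ⋂ i, {u' | u' i < v i} := by
    ext u'; simp [vlt, Set.mem_iInter]
  rw [this]
  exact isOpen_iInter_of_finite fun i => isOpen_lt (continuous_apply i) continuous_const

lemma isOpen_vlt_right (u : Fin n → ℝ) : IsOpen {v' : Fin n → ℝ | vlt u v'} := by
  have : {v' : Fin n → ℝ | vlt u v'} = ⋂ i, {v' | u i < v' i} := by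
    ext v'; simp [vlt, Set.mem_iInter]
  rw [this]
  exact isOpen_iInter_of_finite fun i => isOpen_lt continuous_const (continuous_apply i)

lemma isOpen_Dplus : IsOpen (Dplus n) := by
  have : Dplus n = ⋂ i, {p : (Fin n → ℝ) × (Fin n → ℝ) | p.1 i < p.2 i} := by
    ext q; simp [Dplus, vlt, Set.mem_iInter]
  rw [this]
  exact isOpen_iInter_of_finite fun i =>
    isOpen_lt ((continuous_apply i).comp continuous_fst) ((continuous_apply i).comp continuous_snd)

/-- Lemma 3.2: any neighborhood of a discontinuity point of `β` in `D_n⁺` contains a point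
`(u,v) ∈ D_n⁺` with `β(·,v)` discontinuous at `u` or `β(u,·)` discontinuous at `v`. -/
theorem discontinuity_propagates_to_partial
    (n : ℕ) (β : (Fin n → ℝ) × (Fin n → ℝ) → ℕ)
    (p : (Fin n → ℝ) × (Fin n → ℝ)) (hp : p ∈ Dplus n) (hdisc : DiscontPt β p) :
    ∀ N ∈ nhdsWithin p (Dplus n),
      ∃ q ∈ N ∩ Dplus n, DiscontAt1 β q.2 q.1 ∨ DiscontAt2 β q.1 q.2 := by
  intro N hN
  by_contra hcon
  apply hdisc
  obtain ⟨O, hOopen, hpO, hON⟩ := mem_nhdsWithin.1 hN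
  obtain ⟨r, hr, hball⟩ := Metric.isOpen_iff.1 (hOopen.inter isOpen_Dplus) p ⟨hpO, hp⟩
  have hballN : Metric.ball p r ⊆ N ∩ Dplus n := fun q hq => ⟨hON (hball hq), (hball hq).2⟩
  -- from hcon: both partials continuous at every point of the ball
  have hc1 : ∀ q ∈ Metric.ball p r, ContinuousWithinAt (fun u' => β (u', q.2)) {u' | vlt u' q.2} q.1 := by
    intro q hq
    by_contra hd
    exact hcon ⟨q, hballN hq, Or.inl hd⟩
  have hc2 : ∀ q ∈ Metric.ball p r, ContinuousWithinAt (fun v' => β (q.1, v')) {v' | vlt q.1 v'} q.2 := by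
    intro q hq
    by_contra hd
    exact hcon ⟨q, hballN hq, Or.inr hd⟩
  -- β is constant on the ball
  have hconst : ∀ q ∈ Metric.ball p r, β q = β p := by
    rintro ⟨u, v⟩ hq
    rw [Metric.mem_ball, Prod.dist_eq, max_lt_iff] at hq
    obtain ⟨hqu, hqv⟩ := hq
    have hmid : ∀ u' : Fin n → ℝ, dist u' p.1 < r → (u', p.2) ∈ Metric.ball p r := by
      intro u' h
      rw [Metric.mem_ball, Prod.dist_eq]
      simpa using max_lt h hr
    have hmid2 : ∀ v' : Fin n → ℝ, dist v' p.2 < r → (u, v') ∈ Metric.ball p r := by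
      intro v' h
      rw [Metric.mem_ball, Prod.dist_eq]
      exact max_lt hqu h
    -- step 1 : β (u, v) = β (u, p.2)
    have step2 : β (u, v) = β (u, p.2) := by
      have hco : ContinuousOn (fun v' => β (u, v')) (Metric.ball p.2 r) := by
        intro v' hv'
        have hq' : (u, v') ∈ Metric.ball p r := hmid2 v' (Metric.mem_ball.1 hv')
        have hv'lt : vlt u v' := (hball hq').2
        have := hc2 (u, v') hq'
        exact ((this.continuousAt ((isOpen_vlt_right u).mem_nhds hv'lt)).continuousWithinAt)
      exact (convex_ball p.2 r).isPreconnected.constant hco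
        (Metric.mem_ball.2 hqv) (Metric.mem_ball_self hr)
    -- step 2 : β (u, p.2) = β p
    have step1 : β (u, p.2) = β p := by
      have hco : ContinuousOn (fun u' => β (u', p.2)) (Metric.ball p.1 r) := by
        intro u' hu'
        have hq' : (u', p.2) ∈ Metric.ball p r := hmid u' (Metric.mem_ball.1 hu')
        have hu'lt : vlt u' p.2 := (hball hq').2
        have := hc1 (u', p.2) hq'
        exact ((this.continuousAt ((isOpen_vlt_left p.2).mem_nhds hu'lt)).continuousWithinAt)
      have := (convex_ball p.1 r).isPreconnected.constant hco
        (Metric.mem_ball.2 hqu) (Metric.mem_ball_self hr)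
      simpa using this
    rw [step2, step1]
  have hev : ∀ᶠ q in nhdsWithin p (Dplus n), β q = β p :=
    Filter.eventually_of_mem
      (mem_nhdsWithin_of_mem_nhds (Metric.ball_mem_nhds p hr)) hconst
  exact tendsto_const_nhds.congr' (hev.mono fun q h => h.symm)
end PersistSpace
end

section
/- Let β : ℝⁿ×ℝⁿ → ℕ satisfy Monotonicity, and let (ū,v̄) ∈ D_n⁺. Then: (i) if ū is a discontinuity point of β(·,v̄), then for every ε > 0 there is u ∈ ℝⁿ with either u ≺ ū or u ≻ ū, with ‖u−ū‖∞ < ε, u ≺ v̄, and β(u,v̄) ≠ β(ū,v̄); (ii) if v̄ is a discontinuity point of β(ū,·), then for every ε > 0 there is v ∈ ℝⁿ with either v ≺ v̄ or v ≻ v̄, with ‖v−v̄‖∞ < ε, ū ≺ v, and β(ū,v) ≠ β(ū,v̄). -/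
namespace PersistSpace

variable {n : ℕ}

lemma exists_delta {n : ℕ} (ε : ℝ) (hε : 0 < ε) (ubar vbar : Fin n → ℝ)
    (h : vlt ubar vbar) : ∃ δ : ℝ, 0 < δ ∧ δ < ε ∧ ∀ i, ubar i + δ < vbar i := by
  rcases isEmpty_or_nonempty (Fin n) with he | hne
  · exact ⟨ε / 2, by linarith, by linarith, fun i => he.elim i⟩
  · obtain ⟨i0, _, hi0⟩ := Finset.exists_min_image Finset.univ
      (fun i => vbar i - ubar i) ⟨Classical.arbitrary (Fin n), Finset.mem_univ _⟩
    have h0 : 0 < vbar i0 - ubar i0 := by have := h i0; linarith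
    refine ⟨min (ε / 2) ((vbar i0 - ubar i0) / 2), by positivity,
      lt_of_le_of_lt (min_le_left _ _) (by linarith), fun i => ?_⟩
    have := hi0 i (Finset.mem_univ i)
    have := min_le_right (ε / 2) ((vbar i0 - ubar i0) / 2)
    linarith

/-- Lemma 3.3: near a discontinuity point of a partial persistent-Betti-numbers function there
are points of `ℝⁿ_{±}` where the value differs. -/
theorem discontinuity_witness_in_diagonal_cone
    (n : ℕ) (β : (Fin n → ℝ) × (Fin n → ℝ) → ℕ) (hβ : Monot β)
    (ubar vbar : Fin n → ℝ) (h : vlt ubar vbar) :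
    (DiscontAt1 β vbar ubar →
      ∀ ε > (0:ℝ), ∃ u : Fin n → ℝ, (vlt u ubar ∨ vlt ubar u) ∧ ‖u - ubar‖ < ε ∧
        vlt u vbar ∧ β (u, vbar) ≠ β (ubar, vbar)) ∧
    (DiscontAt2 β ubar vbar →
      ∀ ε > (0:ℝ), ∃ v : Fin n → ℝ, (vlt v vbar ∨ vlt vbar v) ∧ ‖v - vbar‖ < ε ∧
        vlt ubar v ∧ β (ubar, v) ≠ β (ubar, vbar)) := by

  constructor
  · intro hd ε hε
    by_contra hcon
    push_neg at hcon
    obtain ⟨δ, hδ0, hδε, hδv⟩ := exists_delta ε hε ubar vbar h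
    set c : Fin n → ℝ := fun _ => δ with hc
    have hnc : ∀ w : Fin n → ℝ, ‖w + c - w‖ < ε ∧ ‖w - c - w‖ < ε := by
      intro w
      constructor <;>
      · refine lt_of_le_of_lt (pi_norm_le_iff_of_nonneg hδ0.le |>.2 fun i => ?_) hδε
        simp [hc, abs_of_nonneg hδ0.le]
    have hlo : β (ubar - c, vbar) = β (ubar, vbar) := by
      refine hcon _ (Or.inl fun i => ?_) (hnc ubar).2 (fun i => ?_)
      · simp [hc]; exact hδ0
      · have := h i; simp only [Pi.sub_apply, hc]; linarith
    have hhi : β (ubar + c, vbar) = β (ubar, vbar) := by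
      refine hcon _ (Or.inr fun i => ?_) (hnc ubar).1 (fun i => ?_)
      · simp [hc]; exact hδ0
      · have := hδv i; simp only [Pi.add_apply, hc]; linarith
    refine hd ?_
    have hev : ∀ᶠ u' in nhdsWithin ubar {u' | vlt u' vbar},
        β (u', vbar) = β (ubar, vbar) := by
      have hb : Metric.ball ubar δ ∈ nhdsWithin ubar {u' | vlt u' vbar} :=
        nhdsWithin_le_nhds (Metric.ball_mem_nhds _ hδ0)
      filter_upwards [hb, self_mem_nhdsWithin] with u' hu' hS
      have hcomp : ∀ i, dist (u' i) (ubar i) < δ :=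
        fun i => lt_of_le_of_lt (dist_le_pi_dist u' ubar i) hu'
      have h1 : β (ubar - c, vbar) ≤ β (u', vbar) := by
        refine hβ.1 _ _ _ (fun i => ?_) hS
        have := hcomp i; rw [Real.dist_eq, abs_lt] at this
        simp only [Pi.sub_apply, hc]; linarith
      have h2 : β (u', vbar) ≤ β (ubar + c, vbar) := by
        refine hβ.1 _ _ _ (fun i => ?_) (fun i => ?_)
        · have := hcomp i; rw [Real.dist_eq, abs_lt] at this
          simp only [Pi.add_apply, hc]; linarith
        · have := hδv i; simp only [Pi.add_apply, hc]; linarith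
      omega
    exact Filter.Tendsto.congr' (hev.mono fun x hx => hx.symm) tendsto_const_nhds
  · intro hd ε hε
    by_contra hcon
    push_neg at hcon
    obtain ⟨δ, hδ0, hδε, hδv⟩ := exists_delta ε hε ubar vbar h
    set c : Fin n → ℝ := fun _ => δ with hc
    have hnc : ∀ w : Fin n → ℝ, ‖w + c - w‖ < ε ∧ ‖w - c - w‖ < ε := by
      intro w
      constructor <;>
      · refine lt_of_le_of_lt (pi_norm_le_iff_of_nonneg hδ0.le |>.2 fun i => ?_) hδε
        simp [hc, abs_of_nonneg hδ0.le]
    have hlo : β (ubar, vbar - c) = β (ubar, vbar) := by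
      refine hcon _ (Or.inl fun i => ?_) (hnc vbar).2 (fun i => ?_)
      · simp [hc]; exact hδ0
      · have := hδv i; simp only [Pi.sub_apply, hc]; linarith
    have hhi : β (ubar, vbar + c) = β (ubar, vbar) := by
      refine hcon _ (Or.inr fun i => ?_) (hnc vbar).1 (fun i => ?_)
      · simp [hc]; exact hδ0
      · have := h i; simp only [Pi.add_apply, hc]; linarith
    refine hd ?_
    have hev : ∀ᶠ v' in nhdsWithin vbar {v' | vlt ubar v'},
        β (ubar, v') = β (ubar, vbar) := by
      have hb : Metric.ball vbar δ ∈ nhdsWithin vbar {v' | vlt ubar v'} :=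
        nhdsWithin_le_nhds (Metric.ball_mem_nhds _ hδ0)
      filter_upwards [hb, self_mem_nhdsWithin] with v' hv' hS
      have hcomp : ∀ i, dist (v' i) (vbar i) < δ :=
        fun i => lt_of_le_of_lt (dist_le_pi_dist v' vbar i) hv'
      have h1 : β (ubar, v') ≤ β (ubar, vbar - c) := by
        refine hβ.2 _ _ _ (fun i => ?_) (fun i => ?_)
        · have := hδv i; simp only [Pi.sub_apply, hc]; linarith
        · have := hcomp i; rw [Real.dist_eq, abs_lt] at this
          simp only [Pi.sub_apply, hc]; linarith
      have h2 : β (ubar, vbar + c) ≤ β (ubar, v') := by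
        refine hβ.2 _ _ _ hS (fun i => ?_)
        have := hcomp i; rw [Real.dist_eq, abs_lt] at this
        simp only [Pi.add_apply, hc]; linarith
      omega
    exact Filter.Tendsto.congr' (hev.mono fun x hx => hx.symm) tendsto_const_nhds
end PersistSpace
end

section
/- Let β : ℝⁿ×ℝⁿ → ℕ be admissible and let (ū,v̄) ∈ D_n⁺. Then: (i) if ū is a discontinuity point of β(·,v̄), then ū is a discontinuity point of β(·,v) for every v with ū ≺ v ≼ v̄; (ii) if v̄ is a discontinuity point of β(ū,·), then v̄ is a discontinuity point of β(u,·) for every u with ū ≼ u ≺ v̄. -/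
namespace PersistSpace

variable {n : ℕ}

lemma cwAt_iff {f : (Fin n → ℝ) → ℕ} {s : Set (Fin n → ℝ)} {x : Fin n → ℝ} :
    ContinuousWithinAt f s x ↔ ∃ δ > (0:ℝ), ∀ y ∈ s, dist y x < δ → f y = f x := by
  rw [ContinuousWithinAt, nhds_discrete, Filter.tendsto_pure]
  rw [Filter.Eventually, Metric.mem_nhdsWithin_iff]
  constructor
  · rintro ⟨ε, hε, hsub⟩
    exact ⟨ε, hε, fun y hy hd => hsub ⟨Metric.mem_ball.mpr hd, hy⟩⟩
  · rintro ⟨ε, hε, hball⟩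
    exact ⟨ε, hε, fun y ⟨hd, hy⟩ => hball y hy (Metric.mem_ball.mp hd)⟩

lemma abs_min_sub (a b : ℝ) : |min a b - b| ≤ |a - b| := by
  rcases le_total a b with hab | hab
  · rw [min_eq_left hab]
  · rw [min_eq_right hab]; simp [abs_nonneg]

lemma abs_max_sub (a b : ℝ) : |max a b - b| ≤ |a - b| := by
  rcases le_total a b with hab | hab
  · rw [max_eq_right hab]; simp [abs_nonneg]
  · rw [max_eq_left hab]

/-- Corollary 3.4 (propagation of discontinuities). -/
theorem discontinuity_propagation
    (n : ℕ) (β : (Fin n → ℝ) × (Fin n → ℝ) → ℕ) (hβ : Admissible β)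
    (ubar vbar : Fin n → ℝ) (h : vlt ubar vbar) :
    (DiscontAt1 β vbar ubar →
      ∀ v : Fin n → ℝ, vlt ubar v → vle v vbar → DiscontAt1 β v ubar) ∧
    (DiscontAt2 β ubar vbar →
      ∀ u : Fin n → ℝ, vle ubar u → vlt u vbar → DiscontAt2 β u vbar) := by
  obtain ⟨hmon1, hmon2⟩ := hβ.1
  have hjump := hβ.2.1
  obtain ⟨δr, hδr, hrc1, hrc2⟩ := hβ.2.2 ubar vbar h
  constructor
  · -- part (i)
    intro hdisc v hv1 hv2
    intro hcont
    apply hdisc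
    rw [cwAt_iff] at hcont ⊢
    obtain ⟨δ1, hδ1, hc⟩ := hcont
    refine ⟨min δ1 δr, lt_min hδ1 hδr, ?_⟩
    intro u' hu' hdist
    set w : Fin n → ℝ := fun i => min (u' i) (ubar i) with hw
    set m : Fin n → ℝ := fun i => max (u' i) (ubar i) with hm
    have hwu : vle w ubar := fun i => min_le_right _ _
    have hwu' : vle w u' := fun i => min_le_left _ _
    have hum : vle ubar m := fun i => le_max_right _ _
    have hu'm : vle u' m := fun i => le_max_left _ _
    have hdw : dist w ubar < min δ1 δr := by
      rw [dist_pi_lt_iff (lt_min hδ1 hδr)]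
      intro i
      rw [dist_pi_lt_iff (lt_min hδ1 hδr)] at hdist
      calc dist (w i) (ubar i) = |min (u' i) (ubar i) - ubar i| := by
            rw [Real.dist_eq]
          _ ≤ |u' i - ubar i| := abs_min_sub _ _
          _ = dist (u' i) (ubar i) := (Real.dist_eq _ _).symm
          _ < min δ1 δr := hdist i
    have hdm : dist m ubar < min δ1 δr := by
      rw [dist_pi_lt_iff (lt_min hδ1 hδr)]
      intro i
      rw [dist_pi_lt_iff (lt_min hδ1 hδr)] at hdist
      calc dist (m i) (ubar i) = |max (u' i) (ubar i) - ubar i| := by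
            rw [Real.dist_eq]
          _ ≤ |u' i - ubar i| := abs_max_sub _ _
          _ = dist (u' i) (ubar i) := (Real.dist_eq _ _).symm
          _ < min δ1 δr := hdist i
    -- β(m, vbar) = β(ubar, vbar) by right continuity
    have hmeq : β (m, vbar) = β (ubar, vbar) := by
      apply hrc1 m hum
      rw [← dist_eq_norm]
      exact lt_of_lt_of_le hdm (min_le_right _ _)
    -- β(w, v) = β(ubar, v) by continuity
    have hweqv : β (w, v) = β (ubar, v) := by
      apply hc w (fun i => lt_of_le_of_lt (hwu i) (hv1 i))
      exact lt_of_lt_of_le hdw (min_le_left _ _)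
    -- jump monotonicity: β(ubar,vbar) ≤ β(w,vbar)
    have hj := hjump w ubar v vbar hwu hv1 hv2
    rw [hweqv] at hj
    simp only [sub_self] at hj
    have hle1 : β (ubar, vbar) ≤ β (w, vbar) := by
      have : (β (ubar, vbar) : ℤ) ≤ β (w, vbar) := by linarith
      exact_mod_cast this
    have hle2 : β (w, vbar) ≤ β (u', vbar) := hmon1 w u' vbar hwu' hu'
    have hle3 : β (u', vbar) ≤ β (m, vbar) :=
      hmon1 u' m vbar hu'm (fun i => max_lt (hu' i) (h i))
    omega
  · -- part (ii)
    intro hdisc u hu1 hu2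
    intro hcont
    apply hdisc
    rw [cwAt_iff] at hcont ⊢
    obtain ⟨δ1, hδ1, hc⟩ := hcont
    rcases isEmpty_or_nonempty (Fin n) with hn | hn
    · refine ⟨1, one_pos, fun v' _ _ => ?_⟩
      have : v' = vbar := funext fun i => (hn.false i).elim
      rw [this]
    · -- δ2 : distance from u to vbar
      set δ2 : ℝ := Finset.univ.inf' (Finset.univ_nonempty) (fun i => vbar i - u i) with hδ2def
      have hδ2 : 0 < δ2 := by
        rw [hδ2def, Finset.lt_inf'_iff]
        intro i _
        linarith [hu2 i]
      have hδ2le : ∀ i, δ2 ≤ vbar i - u i := fun i =>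
        Finset.inf'_le _ (Finset.mem_univ i)
      set δ : ℝ := min δ1 (min δr δ2) with hδdef
      have hδ : 0 < δ := lt_min hδ1 (lt_min hδr hδ2)
      refine ⟨δ, hδ, ?_⟩
      intro v' hv' hdist
      set w : Fin n → ℝ := fun i => min (v' i) (vbar i) with hw
      set m : Fin n → ℝ := fun i => max (v' i) (vbar i) with hm
      have hwv : vle w vbar := fun i => min_le_right _ _
      have hwv' : vle w v' := fun i => min_le_left _ _
      have hvm : vle vbar m := fun i => le_max_right _ _
      have hv'm : vle v' m := fun i => le_max_left _ _
      have hdw : dist w vbar < δ := by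
        rw [dist_pi_lt_iff hδ]
        intro i
        rw [dist_pi_lt_iff hδ] at hdist
        calc dist (w i) (vbar i) = |min (v' i) (vbar i) - vbar i| := by
              rw [Real.dist_eq]
            _ ≤ |v' i - vbar i| := abs_min_sub _ _
            _ = dist (v' i) (vbar i) := (Real.dist_eq _ _).symm
            _ < δ := hdist i
      have hdm : dist m vbar < δ := by
        rw [dist_pi_lt_iff hδ]
        intro i
        rw [dist_pi_lt_iff hδ] at hdist
        calc dist (m i) (vbar i) = |max (v' i) (vbar i) - vbar i| := by
              rw [Real.dist_eq]
            _ ≤ |v' i - vbar i| := abs_max_sub _ _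
            _ = dist (v' i) (vbar i) := (Real.dist_eq _ _).symm
            _ < δ := hdist i
      -- u ≺ w
      have huw : vlt u w := by
        intro i
        have h1 : dist (w i) (vbar i) < δ2 := by
          have := (dist_pi_lt_iff hδ).mp hdw i
          exact lt_of_lt_of_le this (le_trans (min_le_right _ _) (min_le_right _ _))
        rw [Real.dist_eq, abs_lt] at h1
        have := hδ2le i
        linarith
      -- β(ubar, m) = β(ubar, vbar) by right continuity
      have hmeq : β (ubar, m) = β (ubar, vbar) := by
        apply hrc2 m hvm
        rw [← dist_eq_norm]
        exact lt_of_lt_of_le hdm (le_trans (min_le_right _ _) (min_le_left _ _))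
      -- β(u, w) = β(u, vbar) by continuity
      have hweqv : β (u, w) = β (u, vbar) := by
        apply hc w huw
        exact lt_of_lt_of_le hdw (min_le_left _ _)
      -- jump monotonicity: β(ubar,w) ≤ β(ubar,vbar)
      have hj := hjump ubar u w vbar hu1 huw hwv
      rw [hweqv] at hj
      have hle1 : β (ubar, w) ≤ β (ubar, vbar) := by
        have : (β (ubar, w) : ℤ) ≤ β (ubar, vbar) := by linarith
        exact_mod_cast this
      have hle2 : β (ubar, vbar) ≤ β (ubar, w) :=
        hmon2 ubar w vbar (fun i => lt_of_le_of_lt (hu1 i) (huw i)) hwv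
      have hle3 : β (ubar, m) ≤ β (ubar, v') :=
        hmon2 ubar v' m hv' hv'm
      have hle4 : β (ubar, v') ≤ β (ubar, w) :=
        hmon2 ubar w v' (fun i => lt_of_le_of_lt (hu1 i) (huw i)) hwv'
      omega
end PersistSpace
end

section
/- Let β : ℝⁿ×ℝⁿ → ℕ be admissible and let p̄ = (ū,v̄) ∈ D_n⁺. Then there exists a real number ε > 0 such that the open set W_ε(p̄) = {(u,v) ∈ ℝⁿ×ℝⁿ : (u ≺ ū or u ≻ ū), (v ≺ v̄ or v ≻ v̄), ‖u−ū‖∞ < ε, ‖v−v̄‖∞ < ε} is contained in D_n⁺ and contains no discontinuity point of β. -/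
namespace PersistSpace

variable {n : ℕ}

private lemma stab_anti (f : ℝ → ℕ) (r : ℝ) (hr : 0 < r)
    (hf : ∀ t t' : ℝ, 0 < t' → t' ≤ t → t ≤ r → f t ≤ f t')
    (M : ℕ) (hM : ∀ t : ℝ, 0 < t → t ≤ r → f t ≤ M) :
    ∃ t₀ : ℝ, 0 < t₀ ∧ t₀ ≤ r ∧ (∀ t, 0 < t → t ≤ t₀ → f t = f t₀) ∧
      (∀ t, 0 < t → t ≤ r → f t ≤ f t₀) := by
  have hne : (f '' Set.Ioc 0 r).Nonempty := ⟨f r, r, ⟨hr, le_refl r⟩, rfl⟩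
  have hbdd : BddAbove (f '' Set.Ioc 0 r) := by
    refine ⟨M, ?_⟩
    rintro x ⟨t, ⟨ht0, htr⟩, rfl⟩
    exact hM t ht0 htr
  obtain ⟨t₀, ⟨ht₀0, ht₀r⟩, heq⟩ := Nat.sSup_mem hne hbdd
  have hle : ∀ t, 0 < t → t ≤ r → f t ≤ f t₀ := by
    intro t ht0 htr
    rw [heq]
    exact le_csSup hbdd ⟨t, ⟨ht0, htr⟩, rfl⟩
  exact ⟨t₀, ht₀0, ht₀r,
    fun t ht0 htt₀ => le_antisymm (hle t ht0 (htt₀.trans ht₀r)) (hf t₀ t ht0 htt₀ ht₀r), hle⟩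

private lemma stab_mono (f : ℝ → ℕ) (r : ℝ) (hr : 0 < r)
    (hf : ∀ t t' : ℝ, 0 < t' → t' ≤ t → t ≤ r → f t' ≤ f t) :
    ∃ s₁ : ℝ, 0 < s₁ ∧ s₁ ≤ r ∧ ∀ s, 0 < s → s ≤ s₁ → f s = f s₁ := by
  have hne : (f '' Set.Ioc 0 r).Nonempty := ⟨f r, r, ⟨hr, le_refl r⟩, rfl⟩
  obtain ⟨s₁, ⟨hs₁0, hs₁r⟩, heq⟩ := Nat.sInf_mem hne
  refine ⟨s₁, hs₁0, hs₁r, fun s hs0 hss₁ => le_antisymm (hf s₁ s hs0 hss₁ hs₁r) ?_⟩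
  rw [heq]
  exact Nat.sInf_le ⟨s, ⟨hs0, hss₁.trans hs₁r⟩, rfl⟩

private lemma side_ball {n : ℕ} (hn : 0 < n) (ε : ℝ) (w wb : Fin n → ℝ) (hε : ‖w - wb‖ < ε)
    (hq : (∀ i, w i < wb i) ∨ (∀ i, wb i < w i)) :
    ∃ ρ > (0:ℝ), ∀ w' : Fin n → ℝ, ‖w' - w‖ < ρ →
      ((∀ i, w i < wb i) → ∀ i, w' i < wb i) ∧
      ((∀ i, wb i < w i) → ∀ i, wb i < w' i) ∧ ‖w' - wb‖ < ε := by
  have hne : (Finset.univ : Finset (Fin n)).Nonempty := ⟨⟨0, hn⟩, Finset.mem_univ _⟩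
  have hm0 : 0 < Finset.univ.inf' hne (fun i => |w i - wb i|) := by
    rw [Finset.lt_inf'_iff]
    intro i _
    rcases hq with hq | hq
    · exact abs_pos.2 (sub_ne_zero.2 (hq i).ne)
    · exact abs_pos.2 (sub_ne_zero.2 (hq i).ne')
  refine ⟨min (ε - ‖w - wb‖) (Finset.univ.inf' hne (fun i => |w i - wb i|)),
    lt_min (sub_pos.2 hε) hm0, fun w' hw' => ?_⟩
  have key : ∀ i, |w' i - w i| < |w i - wb i| := by
    intro i
    have h1 : |w' i - w i| ≤ ‖w' - w‖ := by
      simpa [Real.norm_eq_abs] using norm_le_pi_norm (w' - w) i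
    have h2 : Finset.univ.inf' hne (fun i => |w i - wb i|) ≤ |w i - wb i| :=
      Finset.inf'_le _ (Finset.mem_univ i)
    calc |w' i - w i| ≤ ‖w' - w‖ := h1
      _ < min (ε - ‖w - wb‖) (Finset.univ.inf' hne (fun i => |w i - wb i|)) := hw'
      _ ≤ _ := min_le_right _ _
      _ ≤ |w i - wb i| := h2
  refine ⟨?_, ?_, ?_⟩
  · intro hlt i
    have hk := key i
    have habs : |w i - wb i| = wb i - w i := by
      rw [abs_of_neg (sub_neg.2 (hlt i))]; ring
    rw [habs] at hk
    have := le_abs_self (w' i - w i)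
    linarith
  · intro hlt i
    have hk := key i
    have habs : |w i - wb i| = w i - wb i := abs_of_pos (sub_pos.2 (hlt i))
    rw [habs] at hk
    have := neg_abs_le (w' i - w i)
    linarith
  · have h3 : ‖w' - wb‖ ≤ ‖w' - w‖ + ‖w - wb‖ := by
      have := norm_add_le (w' - w) (w - wb)
      simpa [sub_add_sub_cancel] using this
    have h4 : ‖w' - w‖ < ε - ‖w - wb‖ := lt_of_lt_of_le hw' (min_le_left _ _)
    linarith

/-- Proposition 3.5: around any proper point there is an `ε > 0` such that the set
`W_ε(p̄)` is contained in `D_n⁺` and contains no discontinuity point of `β`. -/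
theorem no_discontinuities_in_Weps
    (n : ℕ) (β : (Fin n → ℝ) × (Fin n → ℝ) → ℕ) (hβ : Admissible β)
    (ubar vbar : Fin n → ℝ) (h : vlt ubar vbar) :
    ∃ ε > (0:ℝ), ∀ p : (Fin n → ℝ) × (Fin n → ℝ),
      ((vlt p.1 ubar ∨ vlt ubar p.1) ∧ (vlt p.2 vbar ∨ vlt vbar p.2) ∧
        ‖p.1 - ubar‖ < ε ∧ ‖p.2 - vbar‖ < ε) →
      p ∈ Dplus n ∧ ¬ DiscontPt β p := by
  obtain ⟨⟨mono1, mono2⟩, jump, rc⟩ := hβ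
  rcases Nat.eq_zero_or_pos n with hn | hn
  · subst hn
    refine ⟨1, one_pos, fun p _ => ⟨fun i => i.elim0, fun hd => hd ?_⟩⟩
    have hconst : ∀ q : (Fin 0 → ℝ) × (Fin 0 → ℝ), β q = β p := by
      intro q
      have hq : q = p := by
        have h1 : q.1 = p.1 := funext fun i => i.elim0
        have h2 : q.2 = p.2 := funext fun i => i.elim0
        exact Prod.ext h1 h2
      rw [hq]
    exact (Filter.EventuallyEq.continuousAt
      (Filter.Eventually.of_forall hconst)).continuousWithinAt
  · have i0 : Fin n := ⟨0, hn⟩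
    have huneF : (Finset.univ : Finset (Fin n)).Nonempty := ⟨i0, Finset.mem_univ _⟩
    obtain ⟨g, hg, hgle⟩ : ∃ g : ℝ, 0 < g ∧ ∀ i, g ≤ vbar i - ubar i := by
      refine ⟨Finset.univ.inf' huneF (fun i => vbar i - ubar i), ?_,
        fun i => Finset.inf'_le _ (Finset.mem_univ i)⟩
      rw [Finset.lt_inf'_iff]
      intro i _
      exact sub_pos.2 (h i)
    obtain ⟨r, hr, hrg⟩ : ∃ r : ℝ, 0 < r ∧ 4 * r ≤ g := ⟨g / 4, by positivity, by linarith⟩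
    -- basic vle / vlt facts for shifted points
    have hvleu : ∀ t t' : ℝ, t' ≤ t → vle (fun i => ubar i - t) (fun i => ubar i - t') := by
      intro t t' htt' i
      show ubar i - t ≤ ubar i - t'
      linarith
    have hvlev : ∀ s s' : ℝ, s' ≤ s → vle (fun i => vbar i - s) (fun i => vbar i - s') := by
      intro s s' hss' i
      show vbar i - s ≤ vbar i - s'
      linarith
    have hS1 : ∀ t : ℝ, 0 ≤ t → vlt (fun i => ubar i - t) vbar := by
      intro t ht i
      show ubar i - t < vbar i
      have := hgle i
      linarith
    have hS2 : ∀ s : ℝ, s ≤ r → vlt ubar (fun i => vbar i - s) := by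
      intro s hs i
      show ubar i < vbar i - s
      have := hgle i
      linarith
    have hS3 : ∀ t s : ℝ, 0 ≤ t → s ≤ r → vlt (fun i => ubar i - t) (fun i => vbar i - s) := by
      intro t s ht hs i
      show ubar i - t < vbar i - s
      have := hgle i
      linarith
    -- stabilization of β (ubar - t, vbar) as t ↓ 0
    obtain ⟨t₀, ht₀0, ht₀r, ht₀c', -⟩ :=
      stab_anti (fun t => β (fun i => ubar i - t, vbar)) r hr
        (fun t t' ht'0 ht't _ => mono1 _ _ _ (hvleu t t' ht't) (hS1 t' ht'0.le))
        (β (ubar, vbar))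
        (fun t ht0 _ => mono1 _ _ _ (fun i => by show ubar i - t ≤ ubar i; linarith) h)
    have ht₀c : ∀ t, 0 < t → t ≤ t₀ →
        β (fun i => ubar i - t, vbar) = β (fun i => ubar i - t₀, vbar) :=
      fun t a b => ht₀c' t a b
    -- stabilization of β (ubar, vbar - s) as s ↓ 0
    obtain ⟨s₁, hs₁0, hs₁r, hs₁c'⟩ :=
      stab_mono (fun s => β (ubar, fun i => vbar i - s)) r hr
        (fun s s' hs'0 hs's hsr => mono2 _ _ _ (hS2 s hsr) (hvlev s s' hs's))
    have hs₁c : ∀ s, 0 < s → s ≤ s₁ →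
        β (ubar, fun i => vbar i - s) = β (ubar, fun i => vbar i - s₁) :=
      fun s a b => hs₁c' s a b
    -- uniform bound for the double family
    have hM : ∀ s t : ℝ, s ≤ r → 0 < t →
        β (fun i => ubar i - t, fun i => vbar i - s) ≤ β (ubar, fun i => vbar i - r) := by
      intro s t hsr ht0
      calc β (fun i => ubar i - t, fun i => vbar i - s)
          ≤ β (ubar, fun i => vbar i - s) :=
            mono1 _ _ _ (fun i => by show ubar i - t ≤ ubar i; linarith) (hS2 s hsr)
        _ ≤ β (ubar, fun i => vbar i - r) := mono2 _ _ _ (hS2 r le_rfl) (hvlev r s hsr)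
    -- stabilization in t for each fixed s
    have hstabT : ∀ s : ℝ, ∃ ts : ℝ, 0 < ts ∧ ts ≤ r ∧ (0 < s → s ≤ r →
        (∀ t, 0 < t → t ≤ ts → β (fun i => ubar i - t, fun i => vbar i - s) =
          β (fun i => ubar i - ts, fun i => vbar i - s)) ∧
        (∀ t, 0 < t → t ≤ r → β (fun i => ubar i - t, fun i => vbar i - s) ≤
          β (fun i => ubar i - ts, fun i => vbar i - s))) := by
      intro s
      by_cases hs : 0 < s ∧ s ≤ r
      · obtain ⟨ts, h1, h2, h3, h4⟩ :=
          stab_anti (fun t => β (fun i => ubar i - t, fun i => vbar i - s)) r hr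
            (fun t t' ht'0 ht't _ => mono1 _ _ _ (hvleu t t' ht't) (hS3 t' s ht'0.le hs.2))
            (β (ubar, fun i => vbar i - r))
            (fun t ht0 _ => hM s t hs.2 ht0)
        exact ⟨ts, h1, h2, fun _ _ => ⟨fun t a b => h3 t a b, fun t a b => h4 t a b⟩⟩
      · exact ⟨r, hr, le_rfl, fun hs0 hsr => absurd ⟨hs0, hsr⟩ hs⟩
    choose T hT0 hTr hTprop using hstabT
    -- stabilization of s ↦ β (ubar - T s, vbar - s)
    have hdmono : ∀ s s' : ℝ, 0 < s' → s' ≤ s → s ≤ r →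
        β (fun i => ubar i - T s', fun i => vbar i - s') ≤
        β (fun i => ubar i - T s, fun i => vbar i - s) := by
      intro s s' hs'0 hs's hsr
      have hs'r : s' ≤ r := hs's.trans hsr
      calc β (fun i => ubar i - T s', fun i => vbar i - s')
          ≤ β (fun i => ubar i - T s', fun i => vbar i - s) :=
            mono2 _ _ _ (hS3 (T s') s (hT0 s').le hsr) (hvlev s s' hs's)
        _ ≤ β (fun i => ubar i - T s, fun i => vbar i - s) :=
            (hTprop s (lt_of_lt_of_le hs'0 hs's) hsr).2 (T s') (hT0 s') (hTr s')
    obtain ⟨s₀, hs₀0, hs₀r, hs₀c'⟩ :=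
      stab_mono (fun s => β (fun i => ubar i - T s, fun i => vbar i - s)) r hr hdmono
    have hs₀c : ∀ s, 0 < s → s ≤ s₀ →
        β (fun i => ubar i - T s, fun i => vbar i - s) =
        β (fun i => ubar i - T s₀, fun i => vbar i - s₀) :=
      fun s a b => hs₀c' s a b
    -- Claim C1 : the stabilized corner value persists with fixed t = T s₀
    have hC1 : ∀ s, 0 < s → s ≤ s₀ →
        β (fun i => ubar i - T s₀, fun i => vbar i - s) =
        β (fun i => ubar i - T s₀, fun i => vbar i - s₀) := by
      intro s hs0 hss₀
      have hsr : s ≤ r := hss₀.trans hs₀r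
      have ht''0 : 0 < min (T s) (T s₀) := lt_min (hT0 s) (hT0 s₀)
      have e1 : β (fun i => ubar i - min (T s) (T s₀), fun i => vbar i - s₀) =
          β (fun i => ubar i - T s₀, fun i => vbar i - s₀) :=
        (hTprop s₀ hs₀0 hs₀r).1 _ ht''0 (min_le_right _ _)
      have e2 : β (fun i => ubar i - min (T s) (T s₀), fun i => vbar i - s) =
          β (fun i => ubar i - T s₀, fun i => vbar i - s₀) := by
        have e := (hTprop s hs0 hsr).1 _ ht''0 (min_le_left _ _)
        rw [e]
        exact hs₀c s hs0 hss₀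
      have hj := jump (fun i => ubar i - T s₀) (fun i => ubar i - min (T s) (T s₀))
        (fun i => vbar i - s₀) (fun i => vbar i - s)
        (hvleu (T s₀) _ (min_le_right _ _))
        (hS3 _ s₀ ht''0.le hs₀r)
        (hvlev s₀ s hss₀)
      rw [e1, e2] at hj
      have hub : β (fun i => ubar i - T s₀, fun i => vbar i - s) ≤
          β (fun i => ubar i - T s₀, fun i => vbar i - s₀) := by
        have h1 := (hTprop s hs0 hsr).2 (T s₀) (hT0 s₀) (hTr s₀)
        have h2 := hs₀c s hs0 hss₀
        omega
      omega
    -- Claim C2 : β is constant on the lower-left stabilized corner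
    have hC2 : ∀ t s, 0 < t → t ≤ T s₀ → 0 < s → s ≤ s₀ →
        β (fun i => ubar i - t, fun i => vbar i - s) =
        β (fun i => ubar i - T s₀, fun i => vbar i - s₀) := by
      intro t s ht0 httst hs0 hss₀
      have hsr : s ≤ r := hss₀.trans hs₀r
      have e := hC1 s hs0 hss₀
      have l : β (fun i => ubar i - T s₀, fun i => vbar i - s) ≤
          β (fun i => ubar i - t, fun i => vbar i - s) :=
        mono1 _ _ _ (hvleu (T s₀) t httst) (hS3 t s ht0.le hsr)
      have u1 : β (fun i => ubar i - t, fun i => vbar i - s) ≤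
          β (fun i => ubar i - T s, fun i => vbar i - s) :=
        (hTprop s hs0 hsr).2 t ht0 (httst.trans (hTr s₀))
      have u2 := hs₀c s hs0 hss₀
      omega
    -- right-continuity data
    obtain ⟨δ₁, hδ₁0, hRu, hRv⟩ := rc ubar vbar h
    obtain ⟨δ₂, hδ₂0, hRb, -⟩ := rc ubar (fun i => vbar i - s₁) (hS2 s₁ hs₁r)
    obtain ⟨δ₃, hδ₃0, -, hRa⟩ := rc (fun i => ubar i - t₀) vbar (hS1 t₀ ht₀0.le)
    -- choice of ε
    set ε := min (min δ₁ δ₂) (min δ₃ (min (min t₀ s₁) (min (T s₀) s₀))) with hεdef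
    have hε0 : 0 < ε := lt_min (lt_min hδ₁0 hδ₂0)
      (lt_min hδ₃0 (lt_min (lt_min ht₀0 hs₁0) (lt_min (hT0 s₀) hs₀0)))
    have hεδ₁ : ε ≤ δ₁ := le_trans (min_le_left _ _) (min_le_left _ _)
    have hεδ₂ : ε ≤ δ₂ := le_trans (min_le_left _ _) (min_le_right _ _)
    have hεδ₃ : ε ≤ δ₃ := le_trans (min_le_right _ _) (min_le_left _ _)
    have hεt₀ : ε ≤ t₀ := le_trans (min_le_right _ _)
      (le_trans (min_le_right _ _) (le_trans (min_le_left _ _) (min_le_left _ _)))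
    have hεs₁ : ε ≤ s₁ := le_trans (min_le_right _ _)
      (le_trans (min_le_right _ _) (le_trans (min_le_left _ _) (min_le_right _ _)))
    have hεtst : ε ≤ T s₀ := le_trans (min_le_right _ _)
      (le_trans (min_le_right _ _) (le_trans (min_le_right _ _) (min_le_left _ _)))
    have hεs₀ : ε ≤ s₀ := le_trans (min_le_right _ _)
      (le_trans (min_le_right _ _) (le_trans (min_le_right _ _) (min_le_right _ _)))
    have hεr : ε ≤ r := hεt₀.trans ht₀r
    -- coordinatewise norm bound
    have hcoord : ∀ (w wb : Fin n → ℝ), ‖w - wb‖ < ε → ∀ i, |w i - wb i| < ε := by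
      intro w wb hw i
      exact lt_of_le_of_lt (by simpa [Real.norm_eq_abs] using norm_le_pi_norm (w - wb) i) hw
    -- everything in the ε-window lies in D_n⁺
    have hDp : ∀ u v : Fin n → ℝ, ‖u - ubar‖ < ε → ‖v - vbar‖ < ε → vlt u v := by
      intro u v hu hv i
      have h1 := (abs_lt.1 (hcoord u ubar hu i)).2
      have h2 := (abs_lt.1 (hcoord v vbar hv i)).1
      have := hgle i
      linarith
    -- Box (+,+)
    have hBpp : ∀ u v : Fin n → ℝ, vlt ubar u → vlt vbar v →
        ‖u - ubar‖ < ε → ‖v - vbar‖ < ε → β (u, v) = β (ubar, vbar) := by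
      intro u v hqu hqv hu hv
      have huvb : vlt u vbar := by
        intro i
        have h1 := (abs_lt.1 (hcoord u ubar hu i)).2
        have := hgle i
        linarith
      have e1 : β (ubar, v) = β (ubar, vbar) :=
        hRv v (fun i => (hqv i).le) (lt_of_lt_of_le hv hεδ₁)
      have e2 : β (u, vbar) = β (ubar, vbar) :=
        hRu u (fun i => (hqu i).le) (lt_of_lt_of_le hu hεδ₁)
      have l1 : β (ubar, v) ≤ β (u, v) :=
        mono1 _ _ _ (fun i => (hqu i).le) (hDp u v hu hv)
      have l2 : β (u, v) ≤ β (u, vbar) := mono2 _ _ _ huvb (fun i => (hqv i).le)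
      omega
    -- Box (+,-)
    have hBpm : ∀ u v : Fin n → ℝ, vlt ubar u → vlt v vbar →
        ‖u - ubar‖ < ε → ‖v - vbar‖ < ε → β (u, v) = β (ubar, fun i => vbar i - s₁) := by
      intro u v hqu hqv hu hv
      have hup1 : β (u, v) ≤ β (u, fun i => vbar i - s₁) := by
        refine mono2 _ _ _ (fun i => ?_) (fun i => ?_)
        · show u i < vbar i - s₁
          have h1 := (abs_lt.1 (hcoord u ubar hu i)).2
          have := hgle i
          linarith
        · show vbar i - s₁ ≤ v i
          have h2 := (abs_lt.1 (hcoord v vbar hv i)).1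
          linarith
      have hup2 : β (u, fun i => vbar i - s₁) = β (ubar, fun i => vbar i - s₁) :=
        hRb u (fun i => (hqu i).le) (lt_of_lt_of_le hu hεδ₂)
      obtain ⟨s, hs0, hsε, hsle⟩ : ∃ s : ℝ, 0 < s ∧ s < ε ∧ ∀ i, v i ≤ vbar i - s := by
        refine ⟨Finset.univ.inf' huneF (fun i => vbar i - v i), ?_, ?_, fun i => ?_⟩
        · rw [Finset.lt_inf'_iff]
          intro i _
          exact sub_pos.2 (hqv i)
        · refine lt_of_le_of_lt (Finset.inf'_le _ (Finset.mem_univ i0)) ?_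
          have h2 := (abs_lt.1 (hcoord v vbar hv i0)).1
          linarith
        · have := Finset.inf'_le (fun i => vbar i - v i) (Finset.mem_univ i)
          linarith
      have hlow1 : β (ubar, fun i => vbar i - s) = β (ubar, fun i => vbar i - s₁) :=
        hs₁c s hs0 (hsε.le.trans hεs₁)
      have hlow2 : β (ubar, fun i => vbar i - s) ≤ β (ubar, v) := by
        refine mono2 _ _ _ (fun i => ?_) hsle
        show ubar i < v i
        have h2 := (abs_lt.1 (hcoord v vbar hv i)).1
        have := hgle i
        linarith
      have hlow3 : β (ubar, v) ≤ β (u, v) :=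
        mono1 _ _ _ (fun i => (hqu i).le) (hDp u v hu hv)
      omega
    -- Box (-,+)
    have hBmp : ∀ u v : Fin n → ℝ, vlt u ubar → vlt vbar v →
        ‖u - ubar‖ < ε → ‖v - vbar‖ < ε → β (u, v) = β (fun i => ubar i - t₀, vbar) := by
      intro u v hqu hqv hu hv
      have e1 : β (fun i => ubar i - t₀, v) = β (fun i => ubar i - t₀, vbar) :=
        hRa v (fun i => (hqv i).le) (lt_of_lt_of_le hv hεδ₃)
      have l1 : β (fun i => ubar i - t₀, v) ≤ β (u, v) := by
        refine mono1 _ _ _ (fun i => ?_) (hDp u v hu hv)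
        show ubar i - t₀ ≤ u i
        have h1 := (abs_lt.1 (hcoord u ubar hu i)).1
        linarith
      obtain ⟨t, ht0, htε, htle⟩ : ∃ t : ℝ, 0 < t ∧ t < ε ∧ ∀ i, u i ≤ ubar i - t := by
        refine ⟨Finset.univ.inf' huneF (fun i => ubar i - u i), ?_, ?_, fun i => ?_⟩
        · rw [Finset.lt_inf'_iff]
          intro i _
          exact sub_pos.2 (hqu i)
        · refine lt_of_le_of_lt (Finset.inf'_le _ (Finset.mem_univ i0)) ?_
          have h1 := (abs_lt.1 (hcoord u ubar hu i0)).1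
          linarith
        · have := Finset.inf'_le (fun i => ubar i - u i) (Finset.mem_univ i)
          linarith
      have hup1 : β (u, v) ≤ β (u, vbar) := by
        refine mono2 _ _ _ (fun i => ?_) (fun i => (hqv i).le)
        exact lt_trans (hqu i) (h i)
      have hup2 : β (u, vbar) ≤ β (fun i => ubar i - t, vbar) :=
        mono1 _ _ _ htle (hS1 t ht0.le)
      have hup3 : β (fun i => ubar i - t, vbar) = β (fun i => ubar i - t₀, vbar) :=
        ht₀c t ht0 (htε.le.trans hεt₀)
      omega
    -- Box (-,-)
    have hBmm : ∀ u v : Fin n → ℝ, vlt u ubar → vlt v vbar →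
        ‖u - ubar‖ < ε → ‖v - vbar‖ < ε →
        β (u, v) = β (fun i => ubar i - T s₀, fun i => vbar i - s₀) := by
      intro u v hqu hqv hu hv
      obtain ⟨t, ht0, htε, htle⟩ : ∃ t : ℝ, 0 < t ∧ t < ε ∧ ∀ i, u i ≤ ubar i - t := by
        refine ⟨Finset.univ.inf' huneF (fun i => ubar i - u i), ?_, ?_, fun i => ?_⟩
        · rw [Finset.lt_inf'_iff]
          intro i _
          exact sub_pos.2 (hqu i)
        · refine lt_of_le_of_lt (Finset.inf'_le _ (Finset.mem_univ i0)) ?_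
          have h1 := (abs_lt.1 (hcoord u ubar hu i0)).1
          linarith
        · have := Finset.inf'_le (fun i => ubar i - u i) (Finset.mem_univ i)
          linarith
      obtain ⟨s, hs0, hsε, hsle⟩ : ∃ s : ℝ, 0 < s ∧ s < ε ∧ ∀ i, v i ≤ vbar i - s := by
        refine ⟨Finset.univ.inf' huneF (fun i => vbar i - v i), ?_, ?_, fun i => ?_⟩
        · rw [Finset.lt_inf'_iff]
          intro i _
          exact sub_pos.2 (hqv i)
        · refine lt_of_le_of_lt (Finset.inf'_le _ (Finset.mem_univ i0)) ?_
          have h2 := (abs_lt.1 (hcoord v vbar hv i0)).1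
          linarith
        · have := Finset.inf'_le (fun i => vbar i - v i) (Finset.mem_univ i)
          linarith
      have hup1 : β (u, v) ≤ β (u, fun i => vbar i - s₀) := by
        refine mono2 _ _ _ (fun i => ?_) (fun i => ?_)
        · show u i < vbar i - s₀
          have := hgle i
          have := hqu i
          linarith
        · show vbar i - s₀ ≤ v i
          have h2 := (abs_lt.1 (hcoord v vbar hv i)).1
          linarith
      have hup2 : β (u, fun i => vbar i - s₀) ≤
          β (fun i => ubar i - t, fun i => vbar i - s₀) :=
        mono1 _ _ _ htle (hS3 t s₀ ht0.le hs₀r)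
      have hup3 := hC2 t s₀ ht0 (htε.le.trans hεtst) hs₀0 le_rfl
      have hlow1 := hC1 s hs0 (hsε.le.trans hεs₀)
      have hlow2 : β (fun i => ubar i - T s₀, fun i => vbar i - s) ≤
          β (fun i => ubar i - T s₀, v) := by
        refine mono2 _ _ _ (fun i => ?_) hsle
        show ubar i - T s₀ < v i
        have h2 := (abs_lt.1 (hcoord v vbar hv i)).1
        have := hgle i
        have := hT0 s₀
        linarith
      have hlow3 : β (fun i => ubar i - T s₀, v) ≤ β (u, v) := by
        refine mono1 _ _ _ (fun i => ?_) (hDp u v hu hv)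
        show ubar i - T s₀ ≤ u i
        have h1 := (abs_lt.1 (hcoord u ubar hu i)).1
        linarith
      omega
    -- assemble
    refine ⟨ε, hε0, fun p hp => ?_⟩
    obtain ⟨hq1, hq2, h1, h2⟩ := hp
    refine ⟨hDp p.1 p.2 h1 h2, fun hd => hd ?_⟩
    obtain ⟨ρ₁, hρ₁0, hball1⟩ := side_ball hn ε p.1 ubar h1 hq1
    obtain ⟨ρ₂, hρ₂0, hball2⟩ := side_ball hn ε p.2 vbar h2 hq2
    have hev : ∀ᶠ q in nhds p, β q = β p := by
      rw [Metric.eventually_nhds_iff]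
      refine ⟨min ρ₁ ρ₂, lt_min hρ₁0 hρ₂0, fun q hq => ?_⟩
      have hd1 : ‖q.1 - p.1‖ < ρ₁ := by
        rw [← dist_eq_norm]
        calc dist q.1 p.1 ≤ dist q p := by rw [Prod.dist_eq]; exact le_max_left _ _
          _ < min ρ₁ ρ₂ := hq
          _ ≤ ρ₁ := min_le_left _ _
      have hd2 : ‖q.2 - p.2‖ < ρ₂ := by
        rw [← dist_eq_norm]
        calc dist q.2 p.2 ≤ dist q p := by rw [Prod.dist_eq]; exact le_max_right _ _
          _ < min ρ₁ ρ₂ := hq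
          _ ≤ ρ₂ := min_le_right _ _
      obtain ⟨hi1a, hi1b, hn1⟩ := hball1 q.1 hd1
      obtain ⟨hi2a, hi2b, hn2⟩ := hball2 q.2 hd2
      show β (q.1, q.2) = β (p.1, p.2)
      rcases hq1 with hA | hA <;> rcases hq2 with hB | hB
      · rw [hBmm q.1 q.2 (hi1a hA) (hi2a hB) hn1 hn2, hBmm p.1 p.2 hA hB h1 h2]
      · rw [hBmp q.1 q.2 (hi1a hA) (hi2b hB) hn1 hn2, hBmp p.1 p.2 hA hB h1 h2]
      · rw [hBpm q.1 q.2 (hi1b hA) (hi2a hB) hn1 hn2, hBpm p.1 p.2 hA hB h1 h2]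
      · rw [hBpp q.1 q.2 (hi1b hA) (hi2b hB) hn1 hn2, hBpp p.1 p.2 hA hB h1 h2]
    exact (Filter.EventuallyEq.continuousAt hev).continuousWithinAt
end PersistSpace
end

section
/- Let β : ℝⁿ×ℝⁿ → ℕ be admissible and tame, and let ū ∈ ℝⁿ. Then there exists a real number ε > 0 such that the open set V_ε = {(u,v) ∈ ℝⁿ×ℝⁿ : (u ≺ ū or u ≻ ū), ‖u−ū‖∞ < ε, and v i > 1/ε for all i} is contained in D_n⁺ and contains no discontinuity point of β. -/
namespace PersistSpace

variable {n : ℕ}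

open Topology Filter in
/-- Proposition 3.6: around any point at infinity there is an `ε > 0` such that
`V_ε(p̄)` is contained in `D_n⁺` and contains no discontinuity point of `β`. -/
theorem no_discontinuities_in_Veps
    (n : ℕ) (β : (Fin n → ℝ) × (Fin n → ℝ) → ℕ) (hβa : Admissible β) (hβt : Tame β)
    (ubar : Fin n → ℝ) :
    ∃ ε > (0:ℝ), ∀ p : (Fin n → ℝ) × (Fin n → ℝ),
      ((vlt p.1 ubar ∨ vlt ubar p.1) ∧ ‖p.1 - ubar‖ < ε ∧ (∀ i, 1/ε < p.2 i)) →
      p ∈ Dplus n ∧ ¬ DiscontPt β p := by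
  classical
  obtain ⟨⟨mon1, _mon2⟩, _, hrc⟩ := hβa
  obtain ⟨C, hC, hbound, -⟩ := hβt
  set A : ℝ := C + ‖ubar‖ + 2 with hAdef
  have hub_le : ∀ i, ubar i ≤ ‖ubar‖ := fun i =>
    le_trans (le_abs_self _) ((Real.norm_eq_abs _) ▸ norm_le_pi_norm ubar i)
  have hA2 : ∀ i, ubar i + 2 ≤ A := fun i => by
    have := hub_le i; simp only [hAdef]; linarith
  have hCA : C ≤ A := by have : (0:ℝ) ≤ ‖ubar‖ := norm_nonneg _; linarith
  have hA0 : 0 < A := lt_of_lt_of_le hC hCA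
  set V : Fin n → ℝ := fun _ => A with hV
  have hubV : vlt ubar V := fun i => by have := hA2 i; show ubar i < A; linarith
  obtain ⟨δ, hδ, hrc1, -⟩ := hrc ubar V hubV
  set w : ℝ → Fin n → ℝ := fun t i => ubar i - t with hw
  have hwV : ∀ t, 0 < t → vlt (w t) V := fun t ht i => by
    have := hubV i; show ubar i - t < A; have := hA2 i; linarith
  set S : Set ℕ := (fun t => β (w t, V)) '' Set.Ioc (0:ℝ) 1 with hS
  have hSne : S.Nonempty := ⟨_, ⟨1, by norm_num, rfl⟩⟩
  have hSbdd : BddAbove S := by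
    refine ⟨β (ubar, V), ?_⟩
    rintro x ⟨t, ht, rfl⟩
    exact mon1 (w t) ubar V (fun i => by show ubar i - t ≤ ubar i; linarith [ht.1]) hubV
  set m : ℕ := sSup S with hm_def
  obtain ⟨tstar, htstar, hm⟩ := Nat.sSup_mem hSne hSbdd
  have hconst : ∀ t, 0 < t → t ≤ tstar → β (w t, V) = m := by
    intro t ht htle
    refine le_antisymm (le_csSup hSbdd ⟨t, ⟨ht, htle.trans htstar.2⟩, rfl⟩) ?_
    calc m = β (w tstar, V) := hm.symm
      _ ≤ β (w t, V) := mon1 _ _ _ (fun i => by show ubar i - tstar ≤ ubar i - t; linarith)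
          (hwV t ht)
  refine ⟨min δ (min tstar (min 1 (1/A))), ?_, ?_⟩
  · exact lt_min hδ (lt_min htstar.1 (lt_min one_pos (one_div_pos.mpr hA0)))
  set ε : ℝ := min δ (min tstar (min 1 (1/A))) with hε
  have hε0 : 0 < ε := lt_min hδ (lt_min htstar.1 (lt_min one_pos (one_div_pos.mpr hA0)))
  have hεδ : ε ≤ δ := min_le_left _ _
  have hεt : ε ≤ tstar := le_trans (min_le_right _ _) (min_le_left _ _)
  have hε1 : ε ≤ 1 := le_trans (min_le_right _ _) (le_trans (min_le_right _ _) (min_le_left _ _))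
  have hεA : ε ≤ 1/A :=
    le_trans (min_le_right _ _) (le_trans (min_le_right _ _) (min_le_right _ _))
  rintro ⟨u0, v0⟩ ⟨hside, hnear, hv⟩
  have hAinv : A ≤ 1/ε := by
    rw [← one_div_one_div A]; exact one_div_le_one_div_of_le hε0 hεA
  have hv' : ∀ i, A < v0 i := fun i => lt_of_le_of_lt hAinv (hv i)
  have hcoord : ∀ i, |u0 i - ubar i| < ε := fun i => by
    have h1 : ‖(u0 - ubar) i‖ ≤ ‖u0 - ubar‖ := norm_le_pi_norm _ i
    rw [Real.norm_eq_abs, Pi.sub_apply] at h1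
    exact h1.trans_lt hnear
  have hu0A : ∀ i, u0 i < A := fun i => by
    have h1 := hcoord i; rw [abs_lt] at h1; have := hA2 i; linarith
  have hDp : ((u0, v0) : (Fin n → ℝ) × (Fin n → ℝ)) ∈ Dplus n :=
    fun i => (hu0A i).trans (hv' i)
  refine ⟨hDp, ?_⟩
  have hred : ∀ u v : Fin n → ℝ, vlt u v → (∀ i, u i < A) → (∀ i, A < v i) →
      β (u, v) = β (u, V) := by
    intro u v huv huA hvA
    exact hbound u v V huv (fun i => huA i) (fun i => le_of_lt (lt_of_le_of_lt hCA (hvA i)))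
      (fun i => hCA)
  have key : ∀ (c : ℕ) (a b : Fin n → ℝ),
      (∀ q : (Fin n → ℝ) × (Fin n → ℝ), (∀ i, a i < q.1 i ∧ q.1 i < b i ∧ A < q.2 i) → β q = c) →
      (∀ i, a i < u0 i ∧ u0 i < b i ∧ A < v0 i) →
      ContinuousWithinAt β (Dplus n) (u0, v0) := by
    intro c a b hval hpmem
    set U : Set ((Fin n → ℝ) × (Fin n → ℝ)) :=
      {q | ∀ i, a i < q.1 i ∧ q.1 i < b i ∧ A < q.2 i} with hU
    have hUopen : IsOpen U := by
      have heq : U = ⋂ i, ({q : (Fin n → ℝ) × (Fin n → ℝ) | a i < q.1 i} ∩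
          ({q | q.1 i < b i} ∩ {q | A < q.2 i})) := by
        ext q; simp only [hU, Set.mem_setOf_eq, Set.mem_iInter, Set.mem_inter_iff]
      rw [heq]
      refine isOpen_iInter_of_finite fun i => ?_
      exact (isOpen_lt continuous_const ((continuous_apply i).comp continuous_fst)).inter
        ((isOpen_lt ((continuous_apply i).comp continuous_fst) continuous_const).inter
         (isOpen_lt continuous_const ((continuous_apply i).comp continuous_snd)))
    have hmem : U ∈ 𝓝 ((u0, v0) : (Fin n → ℝ) × (Fin n → ℝ)) := hUopen.mem_nhds hpmem
    have hev : β =ᶠ[𝓝[Dplus n] ((u0, v0) : (Fin n → ℝ) × (Fin n → ℝ))]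
        fun _ => β (u0, v0) := by
      have h1 : β (u0, v0) = c := hval _ hpmem
      filter_upwards [nhdsWithin_le_nhds hmem] with q hq
      rw [hval q hq, h1]
    exact continuousWithinAt_const.congr_of_eventuallyEq hev rfl
  have rightCase : (∀ i, ubar i < u0 i) → ContinuousWithinAt β (Dplus n) (u0, v0) := by
    intro hub
    apply key (β (ubar, V)) ubar (fun i => ubar i + ε)
    · rintro ⟨u, v⟩ hq
      have huA : ∀ i, u i < A := fun i => by
        have h1 := (hq i).2.1; have := hA2 i; linarith
      have huv : vlt u v := fun i => (huA i).trans (hq i).2.2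
      rw [hred u v huv huA (fun i => (hq i).2.2)]
      apply hrc1 u (fun i => (hq i).1.le)
      rw [pi_norm_lt_iff hδ]
      intro i
      rw [Pi.sub_apply, Real.norm_eq_abs, abs_lt]
      have h1 := (hq i).1; have h2 := (hq i).2.1
      constructor <;> linarith
    · intro i
      have h1 := hcoord i; rw [abs_lt] at h1
      exact ⟨hub i, by linarith, hv' i⟩
  have leftCase : (∀ i, u0 i < ubar i) → Nonempty (Fin n) →
      ContinuousWithinAt β (Dplus n) (u0, v0) := by
    intro hlt hne
    haveI := hne
    apply key m (fun i => ubar i - ε) ubar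
    · rintro ⟨u, v⟩ hq
      have huub : ∀ i, u i < ubar i := fun i => (hq i).2.1
      have huA : ∀ i, u i < A := fun i => (huub i).trans (by have := hA2 i; linarith)
      have huv : vlt u v := fun i => (huA i).trans (hq i).2.2
      rw [hred u v huv huA (fun i => (hq i).2.2)]
      set t : ℝ := Finset.univ.inf' Finset.univ_nonempty (fun i => ubar i - u i) with ht
      have ht0 : 0 < t := by
        rw [ht, Finset.lt_inf'_iff]
        intro i _; linarith [huub i]
      have htle : ∀ i, t ≤ ubar i - u i := fun i =>
        Finset.inf'_le _ (Finset.mem_univ i)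
      have htε : t < ε := by
        obtain ⟨i⟩ := hne
        have h1 := (hq i).1
        exact lt_of_le_of_lt (htle i) (by linarith)
      refine le_antisymm ?_ ?_
      · calc β (u, V) ≤ β (w t, V) :=
              mon1 u (w t) V (fun i => by show u i ≤ ubar i - t; linarith [htle i]) (hwV t ht0)
          _ = m := hconst t ht0 (le_of_lt (htε.trans_le hεt))
      · calc m = β (w ε, V) := (hconst ε hε0 hεt).symm
          _ ≤ β (u, V) := mon1 (w ε) u V
              (fun i => by show ubar i - ε ≤ u i; linarith [(hq i).1])
              (fun i => huA i)
    · intro i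
      have h1 := hcoord i; rw [abs_lt] at h1
      exact ⟨by linarith, hlt i, hv' i⟩
  intro hd
  apply hd
  rcases hside with h | h
  · rcases isEmpty_or_nonempty (Fin n) with hE | hne
    · exact rightCase (fun i => hE.elim i)
    · exact leftCase h hne
  · exact rightCase h
end PersistSpace
end

section
/- (Multidimensional Representation Theorem.) Let β : ℝⁿ×ℝⁿ → ℕ be admissible and tame. Then for every (ū,v̄) ∈ D_n⁺ and every e ∈ ℝⁿ with e ≻ 0, the family of multiplicities (μ(ū − s·e, v̄ + t·e)) indexed by real numbers s ≥ 0, t > 0 has finite support, the family (μ∞(ū − s·e)) indexed by real numbers s ≥ 0 has finite support, and β(ū,v̄) = Σ_{s≥0, t>0} μ(ū − s·e, v̄ + t·e) + Σ_{s≥0} μ∞(ū − s·e). -/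
namespace PersistSpace

variable {n : ℕ}

/-- Sum of left-jumps of a right-continuous antitone integer step function. -/
lemma jumpA_aux (g j : ℝ → ℤ) (T : ℝ)
    (hanti : ∀ t t', 0 ≤ t → t ≤ t' → g t' ≤ g t)
    (hrc : ∀ t, 0 ≤ t → ∃ δ > 0, ∀ η, 0 < η → η ≤ δ → g (t + η) = g t)
    (hj : ∀ t, 0 < t → ∃ δ > 0, δ < t ∧ ∀ η, 0 < η → η ≤ δ → j t = g (t - η) - g t)
    (hconst : ∀ t, T ≤ t → g t = g T) :
    ∀ k : ℕ, ∀ a : ℝ, 0 ≤ a → a ≤ T → (g a - g T).toNat ≤ k →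
    ∃ Φ : Finset ℝ, (∀ t, a < t → j t ≠ 0 → t ∈ Φ) ∧ (∀ t ∈ Φ, a < t ∧ j t ≠ 0) ∧
      Φ.sum j = g a - g T := by
  -- first: a sub-argument for the constant case
  have base : ∀ a : ℝ, 0 ≤ a → a ≤ T → g a = g T →
      ∃ Φ : Finset ℝ, (∀ t, a < t → j t ≠ 0 → t ∈ Φ) ∧ (∀ t ∈ Φ, a < t ∧ j t ≠ 0) ∧
        Φ.sum j = g a - g T := by
    intro a ha haT hgaT
    have hconst' : ∀ t, a ≤ t → g t = g a := by
      intro t hat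
      rcases le_total t T with h1 | h1
      · have h2 := hanti a t ha hat
        have h3 := hanti t T (le_trans ha hat) h1
        omega
      · rw [hconst t h1, hgaT]
    refine ⟨∅, ?_, by simp, by simp [hgaT]⟩
    intro t hat hjt
    exfalso; apply hjt
    obtain ⟨δ, hδ, hδt, hval⟩ := hj t (lt_of_le_of_lt ha hat)
    have hη : (0:ℝ) < min δ ((t - a)/2) := by
      apply lt_min hδ; linarith
    have h1 : j t = g (t - min δ ((t - a)/2)) - g t := hval _ hη (min_le_left _ _)
    have h2 : g (t - min δ ((t - a)/2)) = g a := by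
      apply hconst'
      have := min_le_right δ ((t - a)/2)
      linarith
    rw [h1, h2, hconst' t (le_of_lt hat)]; ring
  intro k
  induction k with
  | zero =>
    intro a ha haT hk
    have h1 : g T ≤ g a := hanti a T ha haT
    have : g a = g T := by omega
    exact base a ha haT this
  | succ k ih =>
    intro a ha haT hk
    rcases eq_or_lt_of_le (hanti a T ha haT) with heq | hlt
    · exact base a ha haT heq.symm
    -- g T < g a
    set Sset : Set ℝ := {t : ℝ | a ≤ t ∧ t ≤ T ∧ g t < g a} with hSset
    have hne : Sset.Nonempty := ⟨T, haT, le_refl _, hlt⟩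
    have hbdd : BddBelow Sset := ⟨a, fun x hx => hx.1⟩
    set ts : ℝ := sInf Sset with hts
    have hats : a ≤ ts := le_csInf hne (fun x hx => hx.1)
    have htsT : ts ≤ T := csInf_le hbdd ⟨haT, le_refl _, hlt⟩
    have hts0 : 0 ≤ ts := le_trans ha hats
    have claim1 : ∀ t, a ≤ t → t < ts → g t = g a := by
      intro t hat htts
      have hnotin : t ∉ Sset := fun hmem => absurd (csInf_le hbdd hmem) (by rw [← hts]; linarith)
      have h2 : ¬ g t < g a := fun hc => hnotin ⟨hat, le_trans htts.le htsT, hc⟩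
      have h3 := hanti a t ha hat
      omega
    have claim2 : a < ts := by
      obtain ⟨δ, hδ, hrca⟩ := hrc a ha
      rcases lt_or_ge a ts with h1 | h1
      · exact h1
      have hts_eq : ts = a := le_antisymm h1 hats
      exfalso
      obtain ⟨x, hxS, hxlt⟩ := exists_lt_of_csInf_lt hne (by rw [← hts, hts_eq]; linarith : sInf Sset < a + δ)
      have hax : a ≤ x := hxS.1
      rcases eq_or_lt_of_le hax with hxa | hxa
      · exact absurd hxS.2.2 (by rw [← hxa]; omega)
      · have : g x = g a := by
          have : x = a + (x - a) := by ring
          rw [this]; exact hrca (x - a) (by linarith) (by linarith)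
        exact absurd hxS.2.2 (by omega)
    have claim3 : g ts < g a := by
      obtain ⟨δ, hδ, hrct⟩ := hrc ts hts0
      obtain ⟨x, hxS, hxlt⟩ := exists_lt_of_csInf_lt hne (by rw [← hts]; linarith : sInf Sset < ts + δ)
      have htsx : ts ≤ x := csInf_le hbdd hxS
      rcases eq_or_lt_of_le htsx with hxeq | hxlt2
      · rw [hxeq]; exact hxS.2.2
      · have : g x = g ts := by
          have : x = ts + (x - ts) := by ring
          rw [this]; exact hrct (x - ts) (by linarith) (by linarith)
        have := hxS.2.2
        have := hanti ts x hts0 htsx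
        omega
    obtain ⟨δ₃, hδ₃, hδ₃ts, hjts⟩ := hj ts (lt_of_le_of_lt ha claim2)
    have hjtsval : j ts = g a - g ts := by
      set η := min δ₃ ((ts - a)/2) with hη
      have hη0 : 0 < η := lt_min hδ₃ (by linarith)
      have h1 : j ts = g (ts - η) - g ts := hjts η hη0 (min_le_left _ _)
      have h2 : g (ts - η) = g a := by
        apply claim1
        · have := min_le_right δ₃ ((ts - a)/2); linarith
        · linarith
      rw [h1, h2]
    have hjtsne : j ts ≠ 0 := by omega
    -- recurse
    have hrec : (g ts - g T).toNat ≤ k := by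
      have h1 : (g a - g T).toNat ≤ k + 1 := hk
      have h2 : (0:ℤ) ≤ g a - g T := by omega
      have h3 : g a - g T ≤ (k:ℤ) + 1 := by omega
      have h4 : g T ≤ g ts := hanti ts T hts0 htsT
      omega
    obtain ⟨Φ', hcov', hmem', hsum'⟩ := ih ts hts0 htsT hrec
    have htsnotin : ts ∉ Φ' := fun hmem => absurd (hmem' ts hmem).1 (lt_irrefl ts)
    refine ⟨insert ts Φ', ?_, ?_, ?_⟩
    · intro t hat hjt
      rcases lt_trichotomy t ts with h1 | h1 | h1
      · exfalso; apply hjt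
        obtain ⟨δ, hδ, hδt, hval⟩ := hj t (lt_of_le_of_lt ha hat)
        set η := min δ ((t - a)/2) with hηdef
        have hη0 : 0 < η := lt_min hδ (by linarith)
        have e1 : j t = g (t - η) - g t := hval η hη0 (min_le_left _ _)
        have e2 : g (t - η) = g a := by
          apply claim1
          · have := min_le_right δ ((t - a)/2); linarith
          · linarith
        have e3 : g t = g a := claim1 t hat.le h1
        rw [e1, e2, e3]; ring
      · rw [h1]; exact Finset.mem_insert_self _ _
      · exact Finset.mem_insert_of_mem (hcov' t h1 hjt)
    · intro t hmem
      rcases Finset.mem_insert.mp hmem with h1 | h1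
      · exact ⟨by rw [h1]; exact claim2, by rw [h1]; exact hjtsne⟩
      · have := hmem' t h1
        exact ⟨lt_trans claim2 this.1, this.2⟩
    · rw [Finset.sum_insert htsnotin, hsum', hjtsval]; ring

lemma jumpA (g j : ℝ → ℤ) (T : ℝ) (hT : 0 ≤ T)
    (hanti : ∀ t t', 0 ≤ t → t ≤ t' → g t' ≤ g t)
    (hrc : ∀ t, 0 ≤ t → ∃ δ > 0, ∀ η, 0 < η → η ≤ δ → g (t + η) = g t)
    (hj : ∀ t, 0 < t → ∃ δ > 0, δ < t ∧ ∀ η, 0 < η → η ≤ δ → j t = g (t - η) - g t)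
    (hconst : ∀ t, T ≤ t → g t = g T) :
    ∃ Φ : Finset ℝ, (∀ t, 0 < t → j t ≠ 0 → t ∈ Φ) ∧ (∀ t ∈ Φ, 0 < t ∧ j t ≠ 0) ∧
      Φ.sum j = g 0 - g T :=
  jumpA_aux g j T hanti hrc hj hconst (g 0 - g T).toNat 0 le_rfl hT le_rfl



lemma jumpB_aux (g j : ℝ → ℤ) (S : ℝ)
    (hanti : ∀ s s', 0 ≤ s → s ≤ s' → g s' ≤ g s)
    (hlc : ∀ s, 0 < s → ∃ δ > 0, δ < s ∧ ∀ η, 0 < η → η ≤ δ → g (s - η) = g s)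
    (hj : ∀ s, 0 ≤ s → ∃ δ > 0, ∀ η, 0 < η → η ≤ δ → j s = g s - g (s + η))
    (hconst : ∀ s, S ≤ s → g s = g S) :
    ∀ k : ℕ, ∀ a : ℝ, 0 ≤ a → (g a - g S).toNat ≤ k →
    ∃ Φ : Finset ℝ, (∀ s, a ≤ s → j s ≠ 0 → s ∈ Φ) ∧ (∀ s ∈ Φ, a ≤ s ∧ j s ≠ 0) ∧
      Φ.sum j = g a - g S := by
  have gaS_eq : ∀ a : ℝ, 0 ≤ a → g a = g S ∨ (a ≤ S ∧ g S ≤ g a) := by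
    intro a ha
    rcases le_total a S with h1 | h1
    · exact Or.inr ⟨h1, hanti a S ha h1⟩
    · exact Or.inl (hconst a h1)
  have base : ∀ a : ℝ, 0 ≤ a → g a = g S →
      ∃ Φ : Finset ℝ, (∀ s, a ≤ s → j s ≠ 0 → s ∈ Φ) ∧ (∀ s ∈ Φ, a ≤ s ∧ j s ≠ 0) ∧
        Φ.sum j = g a - g S := by
    intro a ha hgaS
    have hconst' : ∀ s, a ≤ s → g s = g a := by
      intro s has
      rcases le_total s S with h1 | h1
      · have h2 := hanti a s ha has
        have h3 := hanti s S (le_trans ha has) h1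
        omega
      · rw [hconst s h1, hgaS]
    refine ⟨∅, ?_, by simp, by simp [hgaS]⟩
    intro s has hjs
    exfalso; apply hjs
    obtain ⟨δ, hδ, hval⟩ := hj s (le_trans ha has)
    have e1 : j s = g s - g (s + δ) := hval δ hδ le_rfl
    have e2 : g (s + δ) = g a := hconst' _ (by linarith)
    rw [e1, e2, hconst' s has]; ring
  intro k
  induction k with
  | zero =>
    intro a ha hk
    rcases gaS_eq a ha with h1 | h1
    · exact base a ha h1
    · have : g a = g S := by omega
      exact base a ha this
  | succ k ih =>
    intro a ha hk
    rcases eq_or_ne (g a) (g S) with heq | hne0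
    · exact base a ha heq
    have haS : a ≤ S ∧ g S ≤ g a := by
      rcases gaS_eq a ha with h1 | h1
      · exact absurd h1 hne0
      · exact h1
    have hlt : g S < g a := lt_of_le_of_ne haS.2 (Ne.symm hne0)
    set Sset : Set ℝ := {s : ℝ | a ≤ s ∧ s ≤ S ∧ g s < g a} with hSset
    have hneS : Sset.Nonempty := ⟨S, haS.1, le_refl _, hlt⟩
    have hbdd : BddBelow Sset := ⟨a, fun x hx => hx.1⟩
    set ss : ℝ := sInf Sset with hss
    have hass : a ≤ ss := le_csInf hneS (fun x hx => hx.1)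
    have hssS : ss ≤ S := csInf_le hbdd ⟨haS.1, le_refl _, hlt⟩
    have hss0 : 0 ≤ ss := le_trans ha hass
    have claim1 : ∀ s, a ≤ s → s < ss → g s = g a := by
      intro s has hsss
      have hnotin : s ∉ Sset := fun hmem => absurd (csInf_le hbdd hmem) (by rw [← hss]; linarith)
      have h2 : ¬ g s < g a := fun hc => hnotin ⟨has, le_trans hsss.le hssS, hc⟩
      have h3 := hanti a s ha has
      omega
    have claim2 : g ss = g a := by
      rcases eq_or_lt_of_le hass with h1 | h1
      · rw [← h1]
      obtain ⟨δ, hδ, hδss, hlcs⟩ := hlc ss (lt_of_le_of_lt ha h1)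
      set s'' := max a (ss - δ) with hs''
      have h2 : s'' < ss := by
        apply max_lt h1; linarith
      have h3 : g s'' = g a := claim1 s'' (le_max_left _ _) h2
      have h4 : g s'' = g ss := by
        have he : s'' = ss - (ss - s'') := by ring
        rw [he]
        apply hlcs
        · linarith
        · have := le_max_right a (ss - δ); linarith
      omega
    have hpast : ∀ η, 0 < η → g (ss + η) < g a := by
      intro η hη
      obtain ⟨x, hxS, hxlt⟩ := exists_lt_of_csInf_lt hneS (by rw [← hss]; linarith : sInf Sset < ss + η)
      have hssx : ss ≤ x := csInf_le hbdd hxS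
      have hxne : x ≠ ss := by
        intro hc
        have := hxS.2.2
        rw [hc] at this
        omega
      have h5 : g (ss + η) ≤ g x := hanti x (ss + η) (le_trans hss0 hssx) hxlt.le
      have := hxS.2.2
      omega
    obtain ⟨δ₄, hδ₄, hjss⟩ := hj ss hss0
    obtain ⟨a', ha'⟩ : ∃ a', a' = ss + δ₄ := ⟨_, rfl⟩
    have hjssval : j ss = g a - g a' := by
      rw [ha', hjss δ₄ hδ₄ le_rfl, claim2]
    have hga' : g a' < g a := by rw [ha']; exact hpast δ₄ hδ₄
    have hjssne : j ss ≠ 0 := by omega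
    have hconst_mid : ∀ η, 0 < η → η ≤ δ₄ → g (ss + η) = g a' := by
      intro η h1 h2
      have e1 := hjss η h1 h2
      have e2 := hjss δ₄ hδ₄ le_rfl
      rw [ha']; omega
    have hrec : (g a' - g S).toNat ≤ k := by
      have h2 : (0:ℤ) ≤ g a - g S := by omega
      have h3 : g a - g S ≤ (k:ℤ) + 1 := by omega
      have h4 : g S ≤ g a' ∨ g a' = g S := by
        rcases gaS_eq a' (by linarith) with h5 | h5
        · exact Or.inr h5
        · exact Or.inl h5.2
      omega
    obtain ⟨Φ', hcov', hmem', hsum'⟩ := ih a' (by linarith) hrec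
    have hssnotin : ss ∉ Φ' := by
      intro hmem
      have := (hmem' ss hmem).1
      rw [ha'] at this
      linarith
    refine ⟨insert ss Φ', ?_, ?_, ?_⟩
    · intro s has hjs
      rcases lt_trichotomy s ss with h1 | h1 | h1
      · exfalso; apply hjs
        obtain ⟨δ, hδ, hval⟩ := hj s (le_trans ha has)
        set η := min δ ((ss - s)/2) with hηdef
        have hη0 : 0 < η := lt_min hδ (by linarith)
        have e1 : j s = g s - g (s + η) := hval η hη0 (min_le_left _ _)
        have e2 : g (s + η) = g a := by
          apply claim1 _ (by linarith)
          have := min_le_right δ ((ss - s)/2); linarith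
        have e3 : g s = g a := claim1 s has h1
        rw [e1, e2, e3]; ring
      · rw [h1]; exact Finset.mem_insert_self _ _
      · rcases le_or_gt a' s with h2 | h2
        · exact Finset.mem_insert_of_mem (hcov' s h2 hjs)
        · exfalso; apply hjs
          obtain ⟨δ, hδ, hval⟩ := hj s (by linarith)
          set η := min δ (a' - s) with hηdef
          have hη0 : 0 < η := lt_min hδ (by linarith)
          have e1 : j s = g s - g (s + η) := hval η hη0 (min_le_left _ _)
          have e2 : g s = g a' := by
            have he : s = ss + (s - ss) := by ring
            rw [he]
            have e2' : g (ss + (s - ss)) = g a' := hconst_mid (s - ss) (by linarith) (by linarith)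
            exact e2'
          have e3 : g (s + η) = g a' := by
            have he : s + η = ss + (s + η - ss) := by ring
            rw [he]
            apply hconst_mid (s + η - ss) (by linarith)
            have hm := min_le_right δ (a' - s)
            rw [hηdef]; linarith
          rw [e1, e2, e3]; ring
    · intro s hmem
      rcases Finset.mem_insert.mp hmem with h1 | h1
      · exact ⟨by rw [h1]; exact hass, by rw [h1]; exact hjssne⟩
      · have := hmem' s h1
        refine ⟨by rw [ha'] at this; linarith [this.1], this.2⟩
    · rw [Finset.sum_insert hssnotin, hsum', hjssval]; ring

lemma jumpB (g j : ℝ → ℤ) (S : ℝ) (hS : 0 ≤ S)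
    (hanti : ∀ s s', 0 ≤ s → s ≤ s' → g s' ≤ g s)
    (hlc : ∀ s, 0 < s → ∃ δ > 0, δ < s ∧ ∀ η, 0 < η → η ≤ δ → g (s - η) = g s)
    (hj : ∀ s, 0 ≤ s → ∃ δ > 0, ∀ η, 0 < η → η ≤ δ → j s = g s - g (s + η))
    (hconst : ∀ s, S ≤ s → g s = g S) :
    ∃ Φ : Finset ℝ, (∀ s, 0 ≤ s → j s ≠ 0 → s ∈ Φ) ∧ (∀ s ∈ Φ, 0 ≤ s ∧ j s ≠ 0) ∧
      Φ.sum j = g 0 - g S :=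
  jumpB_aux g j S hanti hlc hj hconst (g 0 - g S).toNat 0 le_rfl le_rfl


section Char

variable {n : ℕ} (β : (Fin n → ℝ) × (Fin n → ℝ) → ℕ)

/-- scaling helper -/
lemma exists_scale (a b : Fin n → ℝ) (ha : vlt 0 a) (hb : vlt 0 b) :
    ∃ δ > (0:ℝ), ∀ δ', 0 < δ' → δ' ≤ δ → ∀ i, δ' * a i ≤ b i := by
  obtain ⟨K, hK⟩ := (Set.finite_range (fun i => a i / b i)).bddAbove
  have hK' : ∀ i, a i / b i ≤ K := fun i => hK ⟨i, rfl⟩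
  have hM : (0:ℝ) < max K 1 := lt_of_lt_of_le one_pos (le_max_right _ _)
  refine ⟨1 / max K 1, by positivity, ?_⟩
  intro δ' h0 hle i
  have hbi : 0 < b i := by simpa using hb i
  have hai : 0 < a i := by simpa using ha i
  have h1 : a i ≤ max K 1 * b i := by
    have h2 : a i / b i ≤ max K 1 := le_trans (hK' i) (le_max_left _ _)
    rw [div_le_iff₀ hbi] at h2; linarith
  calc δ' * a i ≤ (1 / max K 1) * a i := by
        apply mul_le_mul_of_nonneg_right hle hai.le
    _ ≤ (1 / max K 1) * (max K 1 * b i) := by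
        apply mul_le_mul_of_nonneg_left h1; positivity
    _ = b i := by field_simp

lemma exists_ub (f : Fin n → ℝ) : ∃ S : ℝ, ∀ i, f i ≤ S := by
  obtain ⟨S, hS⟩ := (Set.finite_range f).bddAbove
  exact ⟨S, fun i => hS ⟨i, rfl⟩⟩

lemma muE_nonneg (hJ : JumpMonot β) {u v e : Fin n → ℝ} (he : vlt 0 e)
    (h : vlt (u + e) (v - e)) : 0 ≤ muE β e u v := by
  have he' : ∀ i, 0 < e i := fun i => by simpa using he i
  have h1 := hJ (u - e) (u + e) (v - e) (v + e)
    (by intro i; simp only [Pi.add_apply, Pi.sub_apply]; linarith [he' i]) h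
    (by intro i; simp only [Pi.add_apply, Pi.sub_apply]; linarith [he' i])
  unfold muE; linarith

lemma muE_mono (hJ : JumpMonot β) {u v e₁ e₂ : Fin n → ℝ} (h1 : vlt 0 e₁)
    (h12 : vle e₁ e₂) (h2 : vlt (u + e₂) (v - e₂)) :
    muE β e₁ u v ≤ muE β e₂ u v := by
  have h1' : ∀ i, 0 < e₁ i := fun i => by simpa using h1 i
  have pos2 : ∀ i, 0 < e₂ i := fun i => lt_of_lt_of_le (h1' i) (h12 i)
  have key : ∀ i, u i + e₂ i < v i - e₂ i := fun i => by simpa using h2 i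
  have tac : ∀ (x y : Fin n → ℝ), (∀ i, x i ≤ y i) → vle x y := fun x y h => h
  have A := hJ (u - e₂) (u - e₁) (v - e₂) (v + e₂)
    (by intro i; simp only [Pi.add_apply, Pi.sub_apply]; linarith [h12 i])
    (by intro i; simp only [Pi.add_apply, Pi.sub_apply]; linarith [h1' i, pos2 i, key i, h12 i])
    (by intro i; simp only [Pi.add_apply, Pi.sub_apply]; linarith [pos2 i])
  have B := hJ (u + e₁) (u + e₂) (v - e₂) (v + e₂)
    (by intro i; simp only [Pi.add_apply]; linarith [h12 i]) h2
    (by intro i; simp only [Pi.add_apply, Pi.sub_apply]; linarith [pos2 i])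
  have Cc := hJ (u - e₁) (u + e₁) (v - e₂) (v - e₁)
    (by intro i; simp only [Pi.add_apply, Pi.sub_apply]; linarith [h1' i])
    (by intro i; simp only [Pi.add_apply, Pi.sub_apply]; linarith [h1' i, key i, h12 i])
    (by intro i; simp only [Pi.sub_apply]; linarith [h12 i])
  have Dd := hJ (u - e₁) (u + e₁) (v + e₁) (v + e₂)
    (by intro i; simp only [Pi.add_apply, Pi.sub_apply]; linarith [h1' i])
    (by intro i; simp only [Pi.add_apply, Pi.sub_apply]; linarith [h1' i, key i, h12 i, pos2 i])
    (by intro i; simp only [Pi.add_apply]; linarith [h12 i])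
  unfold muE; linarith

lemma mult_eq_muE (hβa : Admissible β) {u v : Fin n → ℝ} (e : Fin n → ℝ)
    (huv : vlt u v) (he : vlt 0 e) :
    ∃ δ₀ > (0:ℝ), vlt (u + δ₀ • e) (v - δ₀ • e) ∧
      ∀ δ, 0 < δ → δ ≤ δ₀ → mult β u v = muE β (δ • e) u v := by
  classical
  obtain ⟨hM, hJ, _⟩ := hβa
  have he' : ∀ i, 0 < e i := fun i => by simpa using he i
  have huv' : ∀ i, u i < v i := fun i => huv i
  obtain ⟨δ₁, hδ₁, hs⟩ := exists_scale e (fun i => (v i - u i)/4) he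
    (by intro i; simp only [Pi.zero_apply]; linarith [huv' i])
  have hadm : ∀ δ, 0 < δ → δ ≤ δ₁ → vlt (u + δ • e) (v - δ • e) := by
    intro δ h0 hle i
    have := hs δ h0 hle i
    simp only [Pi.add_apply, Pi.sub_apply, Pi.smul_apply, smul_eq_mul]
    linarith [huv' i]
  have hvlt0 : ∀ δ : ℝ, 0 < δ → vlt 0 (δ • e) := by
    intro δ h0 i
    simp only [Pi.zero_apply, Pi.smul_apply, smul_eq_mul]
    exact mul_pos h0 (he' i)
  set P : ℤ → Prop := fun m => ∃ δ, 0 < δ ∧ δ ≤ δ₁ ∧ m = muE β (δ • e) u v with hP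
  have Hbdd : ∃ b : ℤ, ∀ z, P z → b ≤ z := by
    refine ⟨0, ?_⟩
    rintro z ⟨δ, h0, hle, rfl⟩
    exact muE_nonneg β hJ (hvlt0 δ h0) (hadm δ h0 hle)
  have Hinh : ∃ z, P z := ⟨muE β (δ₁ • e) u v, δ₁, hδ₁, le_rfl, rfl⟩
  obtain ⟨m₀, ⟨δ₀, hδ₀pos, hδ₀le, hm₀⟩, hleast⟩ := Int.exists_least_of_bdd Hbdd Hinh
  have hsmul_le : ∀ δ δ' : ℝ, 0 < δ → δ ≤ δ' → vle (δ • e) (δ' • e) := by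
    intro δ δ' h0 hle i
    simp only [Pi.smul_apply, smul_eq_mul]
    exact mul_le_mul_of_nonneg_right hle (he' i).le
  have key : ∀ δ, 0 < δ → δ ≤ δ₀ → muE β (δ • e) u v = m₀ := by
    intro δ h0 hle
    have hle2 : muE β (δ • e) u v ≤ m₀ := by
      rw [hm₀]
      exact muE_mono β hJ (hvlt0 δ h0) (hsmul_le δ δ₀ h0 hle) (hadm δ₀ hδ₀pos hδ₀le)
    have hge : m₀ ≤ muE β (δ • e) u v :=
      hleast _ ⟨δ, h0, le_trans hle hδ₀le, rfl⟩
    omega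
  have hisleast : IsLeast {m : ℤ | ∃ e' : Fin n → ℝ,
      vlt 0 e' ∧ vlt (u + e') (v - e') ∧ m = muE β e' u v} m₀ := by
    constructor
    · exact ⟨δ₀ • e, hvlt0 δ₀ hδ₀pos, hadm δ₀ hδ₀pos hδ₀le, hm₀⟩
    · rintro x ⟨e', he', hadm', rfl⟩
      have he'' : ∀ i, 0 < e' i := fun i => by simpa using he' i
      obtain ⟨δ₂, hδ₂, hs2⟩ := exists_scale e e' he he'
      set δ := min δ₀ δ₂ with hδdef
      have h0 : 0 < δ := lt_min hδ₀pos hδ₂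
      have h1 : muE β (δ • e) u v = m₀ := key δ h0 (min_le_left _ _)
      have h2 : muE β (δ • e) u v ≤ muE β e' u v := by
        apply muE_mono β hJ (hvlt0 δ h0) _ hadm'
        intro i
        simp only [Pi.smul_apply, smul_eq_mul]
        exact hs2 δ h0 (min_le_right _ _) i
      omega
  refine ⟨δ₀, hδ₀pos, hadm δ₀ hδ₀pos hδ₀le, fun δ h1 h2 => ?_⟩
  rw [mult, hisleast.csInf_eq, ← key δ h1 h2]

lemma multInf_eq_muInfE (hβa : Admissible β) {C : ℝ}
    (hbound : ∀ u v v' : Fin n → ℝ, vlt u v → vlt u v' → (∀ i, C ≤ v i) → (∀ i, C ≤ v' i) →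
      β (u, v) = β (u, v'))
    {u V : Fin n → ℝ} (e : Fin n → ℝ) (he : vlt 0 e) (hV : ∀ i, C ≤ V i) (huV : vlt u V) :
    ∃ δ₀ > (0:ℝ), vlt (u + δ₀ • e) V ∧
      ∀ δ, 0 < δ → δ ≤ δ₀ → multInf β u = muInfE β (δ • e) V u := by
  classical
  obtain ⟨hM, hJ, _⟩ := hβa
  have he' : ∀ i, 0 < e i := fun i => by simpa using he i
  have huV' : ∀ i, u i < V i := fun i => huV i
  obtain ⟨δ₁, hδ₁, hs⟩ := exists_scale e (fun i => (V i - u i)/2) he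
    (by intro i; simp only [Pi.zero_apply]; linarith [huV' i])
  have hadm : ∀ δ, 0 < δ → δ ≤ δ₁ → vlt (u + δ • e) V := by
    intro δ h0 hle i
    have := hs δ h0 hle i
    simp only [Pi.add_apply, Pi.smul_apply, smul_eq_mul]
    linarith [huV' i]
  have hvlt0 : ∀ δ : ℝ, 0 < δ → vlt 0 (δ • e) := by
    intro δ h0 i
    simp only [Pi.zero_apply, Pi.smul_apply, smul_eq_mul]
    exact mul_pos h0 (he' i)
  have hlow : ∀ (e' v' : Fin n → ℝ), vlt 0 e' → vlt (u + e') v' → 0 ≤ muInfE β e' v' u := by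
    intro e' v' h0 hv'
    have h1 : (β (u - e', v') : ℤ) ≤ β (u + e', v') := by
      exact_mod_cast hM.1 (u - e') (u + e') v'
        (by intro i; simp only [Pi.add_apply, Pi.sub_apply]
            have := h0 i; simp only [Pi.zero_apply] at this; linarith) hv'
    unfold muInfE; linarith
  have hmono_e : ∀ (δ δ' : ℝ), 0 < δ → δ ≤ δ' → δ' ≤ δ₁ →
      muInfE β (δ • e) V u ≤ muInfE β (δ' • e) V u := by
    intro δ δ' h0 hle hle1
    have h1 : (β (u + δ • e, V) : ℤ) ≤ β (u + δ' • e, V) := by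
      exact_mod_cast hM.1 (u + δ • e) (u + δ' • e) V
        (by intro i; simp only [Pi.add_apply, Pi.smul_apply, smul_eq_mul]
            nlinarith [he' i]) (hadm δ' (lt_of_lt_of_le h0 hle) hle1)
    have h2 : (β (u - δ' • e, V) : ℤ) ≤ β (u - δ • e, V) := by
      exact_mod_cast hM.1 (u - δ' • e) (u - δ • e) V
        (by intro i; simp only [Pi.sub_apply, Pi.smul_apply, smul_eq_mul]
            nlinarith [he' i])
        (by intro i; simp only [Pi.sub_apply, Pi.smul_apply, smul_eq_mul]
            nlinarith [he' i, huV' i, mul_pos h0 (he' i)])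
    unfold muInfE; omega
  set P : ℤ → Prop := fun m => ∃ δ, 0 < δ ∧ δ ≤ δ₁ ∧ m = muInfE β (δ • e) V u with hP
  have Hbdd : ∃ b : ℤ, ∀ z, P z → b ≤ z := by
    refine ⟨0, ?_⟩
    rintro z ⟨δ, h0, hle, rfl⟩
    exact hlow _ _ (hvlt0 δ h0) (hadm δ h0 hle)
  have Hinh : ∃ z, P z := ⟨muInfE β (δ₁ • e) V u, δ₁, hδ₁, le_rfl, rfl⟩
  obtain ⟨m₀, ⟨δ₀, hδ₀pos, hδ₀le, hm₀⟩, hleast⟩ := Int.exists_least_of_bdd Hbdd Hinh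
  have key : ∀ δ, 0 < δ → δ ≤ δ₀ → muInfE β (δ • e) V u = m₀ := by
    intro δ h0 hle
    have hle2 : muInfE β (δ • e) V u ≤ m₀ := by
      rw [hm₀]; exact hmono_e δ δ₀ h0 hle hδ₀le
    have hge : m₀ ≤ muInfE β (δ • e) V u := hleast _ ⟨δ, h0, le_trans hle hδ₀le, rfl⟩
    omega
  have hisleast : IsLeast {m : ℤ | ∃ e' v' : Fin n → ℝ,
      vlt 0 e' ∧ vlt (u + e') v' ∧ m = muInfE β e' v' u} m₀ := by
    constructor
    · exact ⟨δ₀ • e, V, hvlt0 δ₀ hδ₀pos, hadm δ₀ hδ₀pos hδ₀le, hm₀⟩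
    · rintro x ⟨e', v', he'', hv', rfl⟩
      have he''' : ∀ i, 0 < e' i := fun i => by simpa using he'' i
      have hv'' : ∀ i, u i + e' i < v' i := fun i => by simpa using hv' i
      obtain ⟨δ₂, hδ₂, hs2⟩ := exists_scale e e' he he''
      set δ := min δ₀ δ₂ with hδdef
      have h0 : 0 < δ := lt_min hδ₀pos hδ₂
      have hδe_le : ∀ i, δ * e i ≤ e' i := hs2 δ h0 (min_le_right _ _)
      have hδδ₁ : δ ≤ δ₁ := le_trans (min_le_left _ _) hδ₀le
      have h1 : muInfE β (δ • e) V u = m₀ := key δ h0 (min_le_left _ _)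
      set w : Fin n → ℝ := fun i => max (v' i) (V i) with hw
      have hw_ge_C : ∀ i, C ≤ w i := fun i => le_trans (hV i) (le_max_right _ _)
      have hvlt_uw : vlt (u + δ • e) w := by
        intro i
        simp only [Pi.add_apply, Pi.smul_apply, smul_eq_mul, hw]
        have := hδe_le i
        calc u i + δ * e i ≤ u i + e' i := by linarith
          _ < v' i := hv'' i
          _ ≤ max (v' i) (V i) := le_max_left _ _
      have hvlt_uV : vlt (u + δ • e) V := hadm δ h0 hδδ₁
      have hvlt_mw : vlt (u - δ • e) w := by
        intro i
        have h3 := hvlt_uw i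
        simp only [Pi.add_apply, Pi.sub_apply, Pi.smul_apply, smul_eq_mul] at h3 ⊢
        nlinarith [mul_pos h0 (he' i)]
      have hvlt_mV : vlt (u - δ • e) V := by
        intro i
        simp only [Pi.sub_apply, Pi.smul_apply, smul_eq_mul]
        nlinarith [huV' i, mul_pos h0 (he' i)]
      have ha : muInfE β (δ • e) w u = muInfE β (δ • e) V u := by
        unfold muInfE
        rw [hbound (u + δ • e) w V hvlt_uw hvlt_uV hw_ge_C hV,
          hbound (u - δ • e) w V hvlt_mw hvlt_mV hw_ge_C hV]
      have hb2 : muInfE β (δ • e) w u ≤ muInfE β (δ • e) v' u := by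
        have := hJ (u - δ • e) (u + δ • e) v' w
          (by intro i; simp only [Pi.add_apply, Pi.sub_apply, Pi.smul_apply, smul_eq_mul]
              nlinarith [mul_pos h0 (he' i)])
          (by intro i
              simp only [Pi.add_apply, Pi.smul_apply, smul_eq_mul]
              calc u i + δ * e i ≤ u i + e' i := by linarith [hδe_le i]
                _ < v' i := hv'' i)
          (by intro i; exact le_max_left _ _)
        unfold muInfE; linarith
      have hc : muInfE β (δ • e) v' u ≤ muInfE β e' v' u := by
        have h4 : (β (u + δ • e, v') : ℤ) ≤ β (u + e', v') := by
          exact_mod_cast hM.1 (u + δ • e) (u + e') v'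
            (by intro i; simp only [Pi.add_apply, Pi.smul_apply, smul_eq_mul]
                linarith [hδe_le i]) hv'
        have h5 : (β (u - e', v') : ℤ) ≤ β (u - δ • e, v') := by
          exact_mod_cast hM.1 (u - e') (u - δ • e) v'
            (by intro i; simp only [Pi.sub_apply, Pi.smul_apply, smul_eq_mul]
                linarith [hδe_le i])
            (by intro i; simp only [Pi.sub_apply, Pi.smul_apply, smul_eq_mul]
                nlinarith [hv'' i, mul_pos h0 (he' i), he''' i])
        unfold muInfE; omega
      omega
  refine ⟨δ₀, hδ₀pos, hadm δ₀ hδ₀pos hδ₀le, fun δ h1 h2 => ?_⟩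
  rw [multInf, hisleast.csInf_eq, ← key δ h1 h2]

end Char



section Abstract

/-- right limit in the first variable -/
noncomputable def FpAux (F : ℝ → ℝ → ℤ) (s t : ℝ) : ℤ :=
  sSup {m : ℤ | ∃ η, 0 < η ∧ m = F (s+η) t}

/-- Abstract two-parameter representation theorem. -/
lemma abstract_main (F M : ℝ → ℝ → ℤ) (MIf : ℝ → ℤ) (ε₀ S T : ℝ)
    (hε₀ : 0 < ε₀) (hS : 0 ≤ S) (hT : 0 ≤ T)
    (Fmono_s : ∀ s s' t, -ε₀ ≤ s → s ≤ s' → -ε₀ ≤ t → F s' t ≤ F s t)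
    (Fmono_t : ∀ s t t', -ε₀ ≤ s → -ε₀ ≤ t → t ≤ t' → F s t' ≤ F s t)
    (Fjump : ∀ s s' t t', -ε₀ ≤ s → s ≤ s' → -ε₀ ≤ t → t ≤ t' →
      F s t' - F s' t' ≤ F s t - F s' t)
    (Flc : ∀ s t, -ε₀ ≤ s → -ε₀ ≤ t → ∃ δ > (0:ℝ), ∀ η, 0 < η → η ≤ δ → F (s-η) t = F s t)
    (Frc : ∀ s t, -ε₀ ≤ s → -ε₀ ≤ t → ∃ δ > (0:ℝ), ∀ η, 0 < η → η ≤ δ → F s (t+η) = F s t)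
    (Fvanish : ∀ s t, S ≤ s → -ε₀ ≤ t → F s t = 0)
    (Fstab : ∀ s t, -ε₀ ≤ s → T ≤ t → F s t = F s T)
    (hM : ∀ s t, 0 ≤ s → 0 < t → ∃ δ₀ > (0:ℝ), ∀ δ, 0 < δ → δ ≤ δ₀ →
        M s t = F (s-δ) (t-δ) - F (s+δ) (t-δ) - F (s-δ) (t+δ) + F (s+δ) (t+δ))
    (hMI : ∀ s, 0 ≤ s → ∃ δ₀ > (0:ℝ), ∀ δ, 0 < δ → δ ≤ δ₀ →
        MIf s = F (s-δ) T - F (s+δ) T) :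
    {p : ℝ × ℝ | 0 ≤ p.1 ∧ 0 < p.2 ∧ M p.1 p.2 ≠ 0}.Finite ∧
    {s : ℝ | 0 ≤ s ∧ MIf s ≠ 0}.Finite ∧
    F 0 0 = (∑ᶠ p ∈ {p : ℝ × ℝ | 0 ≤ p.1 ∧ 0 < p.2}, M p.1 p.2) +
      ∑ᶠ s ∈ {s : ℝ | 0 ≤ s}, MIf s := by
  classical
  set Fp : ℝ → ℝ → ℤ := FpAux F with hFpdef
  -- attainment of the right limit
  have Fp_att : ∀ s t, -ε₀ ≤ s → -ε₀ ≤ t →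
      ∃ δ > (0:ℝ), ∀ η, 0 < η → η ≤ δ → F (s+η) t = Fp s t := by
    intro s t hs ht
    have Hbdd : ∃ b : ℤ, ∀ z : ℤ, (∃ η, 0 < η ∧ z = F (s+η) t) → z ≤ b := by
      refine ⟨F s t, ?_⟩
      rintro z ⟨η, hη, rfl⟩
      exact Fmono_s s (s+η) t hs (by linarith) ht
    have Hinh : ∃ z : ℤ, ∃ η, 0 < η ∧ z = F (s+η) t := ⟨F (s+1) t, 1, one_pos, rfl⟩
    obtain ⟨M₀, ⟨η₀, hη₀, hM₀⟩, hub⟩ := Int.exists_greatest_of_bdd Hbdd Hinh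
    have hsup : Fp s t = M₀ := by
      rw [hFpdef]
      exact IsGreatest.csSup_eq ⟨⟨η₀, hη₀, hM₀⟩, fun z hz => hub z hz⟩
    refine ⟨η₀, hη₀, fun η h1 h2 => ?_⟩
    have ha : F (s+η₀) t ≤ F (s+η) t := Fmono_s (s+η) (s+η₀) t (by linarith) (by linarith) ht
    have hb : F (s+η) t ≤ M₀ := hub _ ⟨η, h1, rfl⟩
    omega
  have Fp_le : ∀ s t, -ε₀ ≤ s → -ε₀ ≤ t → Fp s t ≤ F s t := by
    intro s t hs ht
    obtain ⟨δ, hδ, hatt⟩ := Fp_att s t hs ht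
    rw [← hatt δ hδ le_rfl]
    exact Fmono_s s (s+δ) t hs (by linarith) ht
  have Fp_ge : ∀ s t η, -ε₀ ≤ s → -ε₀ ≤ t → 0 < η → F (s+η) t ≤ Fp s t := by
    intro s t η hs ht hη
    obtain ⟨δ, hδ, hatt⟩ := Fp_att s t hs ht
    rcases le_or_gt η δ with h1 | h1
    · rw [hatt η hη h1]
    · rw [← hatt δ hδ le_rfl]
      exact Fmono_s (s+δ) (s+η) t (by linarith) (by linarith) ht
  have Fp_mono_t : ∀ s t t', -ε₀ ≤ s → -ε₀ ≤ t → t ≤ t' → Fp s t' ≤ Fp s t := by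
    intro s t t' hs ht htt
    obtain ⟨δa, hδa, hatta⟩ := Fp_att s t hs ht
    obtain ⟨δb, hδb, hattb⟩ := Fp_att s t' hs (by linarith)
    set η := min δa δb with hη
    have hη0 : 0 < η := lt_min hδa hδb
    rw [← hatta η hη0 (min_le_left _ _), ← hattb η hη0 (min_le_right _ _)]
    exact Fmono_t (s+η) t t' (by linarith) ht htt
  have Fp_rc : ∀ s t, -ε₀ ≤ s → -ε₀ ≤ t →
      ∃ δ > (0:ℝ), ∀ ξ, 0 < ξ → ξ ≤ δ → Fp s (t+ξ) = Fp s t := by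
    intro s t hs ht
    obtain ⟨δ₆, hδ₆, hatt⟩ := Fp_att s t hs ht
    obtain ⟨δ₇, hδ₇, hrc7⟩ := Frc (s+δ₆) t (by linarith) ht
    refine ⟨δ₇, hδ₇, fun ξ h1 h2 => ?_⟩
    have hge : F (s+δ₆) (t+ξ) ≤ Fp s (t+ξ) := Fp_ge s (t+ξ) δ₆ hs (by linarith) hδ₆
    have heq : F (s+δ₆) (t+ξ) = F (s+δ₆) t := hrc7 ξ h1 h2
    have h3 : Fp s (t+ξ) ≤ Fp s t := Fp_mono_t s t (t+ξ) hs ht (by linarith)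
    have h4 := hatt δ₆ hδ₆ le_rfl
    omega
  have Fp_stab : ∀ s t, -ε₀ ≤ s → T ≤ t → Fp s t = Fp s T := by
    intro s t hs ht
    have hTε : -ε₀ ≤ T := by linarith
    have htε : -ε₀ ≤ t := by linarith
    obtain ⟨δa, hδa, hatta⟩ := Fp_att s t hs htε
    obtain ⟨δb, hδb, hattb⟩ := Fp_att s T hs hTε
    set η := min δa δb with hηdef
    have hη0 : 0 < η := lt_min hδa hδb
    rw [← hatta η hη0 (min_le_left _ _), ← hattb η hη0 (min_le_right _ _)]
    exact Fstab (s+η) t (by linarith) ht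
  -- properties of h s t := F s t - Fp s t
  have h_anti : ∀ s t t', 0 ≤ s → -ε₀ ≤ t → t ≤ t' →
      F s t' - Fp s t' ≤ F s t - Fp s t := by
    intro s t t' hs ht htt
    have hsε : -ε₀ ≤ s := by linarith
    obtain ⟨δa, hδa, hatta⟩ := Fp_att s t hsε ht
    obtain ⟨δb, hδb, hattb⟩ := Fp_att s t' hsε (by linarith)
    set η := min δa δb with hηdef
    have hη0 : 0 < η := lt_min hδa hδb
    rw [← hatta η hη0 (min_le_left _ _), ← hattb η hη0 (min_le_right _ _)]
    exact Fjump s (s+η) t t' hsε (by linarith) ht htt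
  have h_nonneg : ∀ s t, 0 ≤ s → -ε₀ ≤ t → 0 ≤ F s t - Fp s t := by
    intro s t hs ht
    have := Fp_le s t (by linarith) ht
    omega
  have h_rc : ∀ s t, 0 ≤ s → -ε₀ ≤ t → ∃ δ > (0:ℝ), ∀ ξ, 0 < ξ → ξ ≤ δ →
      F s (t+ξ) - Fp s (t+ξ) = F s t - Fp s t := by
    intro s t hs ht
    have hsε : -ε₀ ≤ s := by linarith
    obtain ⟨δ₁, hδ₁, h1⟩ := Frc s t hsε ht
    obtain ⟨δ₂, hδ₂, h2⟩ := Fp_rc s t hsε ht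
    refine ⟨min δ₁ δ₂, lt_min hδ₁ hδ₂, fun ξ hξ hξle => ?_⟩
    rw [h1 ξ hξ (le_trans hξle (min_le_left _ _)), h2 ξ hξ (le_trans hξle (min_le_right _ _))]
  have h_stab : ∀ s t, 0 ≤ s → T ≤ t → F s t - Fp s t = F s T - Fp s T := by
    intro s t hs ht
    have hsε : -ε₀ ≤ s := by linarith
    rw [Fstab s t hsε ht, Fp_stab s t hsε ht]
  -- stabilization of left limits in t
  have leftstab : ∀ (G : ℝ → ℤ) (t : ℝ), 0 < t →
      (∀ w w', -ε₀ ≤ w → w ≤ w' → G w' ≤ G w) →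
      ∃ (L : ℤ) (δ : ℝ), 0 < δ ∧ δ ≤ t/2 ∧ δ ≤ ε₀ ∧
        ∀ η, 0 < η → η ≤ δ → G (t-η) = L := by
    intro G t ht hmono
    set c := min (t/2) ε₀ with hcdef
    have hc : 0 < c := lt_min (by linarith) hε₀
    have hcle : c ≤ t/2 := min_le_left _ _
    have hcε : c ≤ ε₀ := min_le_right _ _
    have Hbdd : ∃ b : ℤ, ∀ z : ℤ, (∃ η, 0 < η ∧ η ≤ c ∧ z = G (t-η)) → b ≤ z := by
      refine ⟨G t, ?_⟩
      rintro z ⟨η, hη, hηc, rfl⟩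
      exact hmono (t-η) t (by linarith) (by linarith)
    have Hinh : ∃ z : ℤ, ∃ η, 0 < η ∧ η ≤ c ∧ z = G (t-η) := ⟨G (t-c), c, hc, le_rfl, rfl⟩
    obtain ⟨L, ⟨η₀, hη₀, hη₀c, hL⟩, hlb⟩ := Int.exists_least_of_bdd Hbdd Hinh
    refine ⟨L, η₀, hη₀, le_trans hη₀c hcle, le_trans hη₀c hcε, fun η h1 h2 => ?_⟩
    have ha : G (t-η) ≤ G (t-η₀) := hmono (t-η₀) (t-η) (by linarith) (by linarith)
    have hb : L ≤ G (t-η) := hlb _ ⟨η, h1, le_trans h2 hη₀c, rfl⟩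
    omega
  -- the key jump formula for M
  have mjump : ∀ s t, 0 ≤ s → 0 < t → ∃ δ > (0:ℝ), δ < t ∧ ∀ η, 0 < η → η ≤ δ →
      M s t = (F s (t-η) - Fp s (t-η)) - (F s t - Fp s t) := by
    intro s t hs ht
    have hsε : -ε₀ ≤ s := by linarith
    have htε : -ε₀ ≤ t := by linarith
    obtain ⟨δ₀, hδ₀, hMst⟩ := hM s t hs ht
    obtain ⟨L, δ₂, hδ₂, hδ₂t, hδ₂ε, hL⟩ := leftstab (fun w => F s w) t ht
      (fun w w' hw hww => Fmono_t s w w' hsε hw hww)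
    obtain ⟨L', δ₂', hδ₂', hδ₂t', hδ₂ε', hL'⟩ := leftstab (fun w => Fp s w) t ht
      (fun w w' hw hww => Fp_mono_t s w w' hsε hw hww)
    set ξ := min δ₂ δ₂' with hξdef
    have hξ0 : 0 < ξ := lt_min hδ₂ hδ₂'
    have hξt : ξ ≤ t/2 := le_trans (min_le_left _ _) hδ₂t
    have hLξ : F s (t-ξ) = L := hL ξ hξ0 (min_le_left _ _)
    have hL'ξ : Fp s (t-ξ) = L' := hL' ξ hξ0 (min_le_right _ _)
    have htξ : (0:ℝ) ≤ t - ξ := by linarith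
    have htξε : -ε₀ ≤ t - ξ := by linarith
    obtain ⟨δ₁, hδ₁, hFrct⟩ := Frc s t hsε htε
    obtain ⟨δ₁', hδ₁', hFprct⟩ := Fp_rc s t hsε htε
    obtain ⟨δ₃, hδ₃, hFlct⟩ := Flc s t hsε htε
    obtain ⟨δ₄, hδ₄, hFlcξ⟩ := Flc s (t-ξ) hsε htξε
    obtain ⟨δ₅, hδ₅, hFattξ⟩ := Fp_att s (t-ξ) hsε htξε
    obtain ⟨δ₆, hδ₆, hFattt⟩ := Fp_att s t hsε htε
    obtain ⟨δ₇, hδ₇, hFrc6⟩ := Frc (s+δ₆) t (by linarith) htε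
    set δ' := min δ₀ (min ξ (min δ₁ (min δ₁' (min δ₃ (min δ₄ (min δ₅ (min δ₆ (min δ₇ ε₀))))))))
      with hδ'def
    have c9 : δ' ≤ min δ₇ ε₀ := by
      refine le_trans (min_le_right _ _) ?_
      refine le_trans (min_le_right _ _) ?_
      refine le_trans (min_le_right _ _) ?_
      refine le_trans (min_le_right _ _) ?_
      refine le_trans (min_le_right _ _) ?_
      refine le_trans (min_le_right _ _) ?_
      refine le_trans (min_le_right _ _) ?_
      exact min_le_right _ _
    have c0 : δ' ≤ δ₀ := min_le_left _ _
    have c1 : δ' ≤ ξ := le_trans (min_le_right _ _) (min_le_left _ _)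
    have c2 : δ' ≤ δ₁ := le_trans (min_le_right _ _) (le_trans (min_le_right _ _) (min_le_left _ _))
    have c3 : δ' ≤ δ₁' := le_trans (min_le_right _ _) (le_trans (min_le_right _ _)
      (le_trans (min_le_right _ _) (min_le_left _ _)))
    have c4 : δ' ≤ δ₃ := le_trans (min_le_right _ _) (le_trans (min_le_right _ _)
      (le_trans (min_le_right _ _) (le_trans (min_le_right _ _) (min_le_left _ _))))
    have c5 : δ' ≤ δ₄ := le_trans (min_le_right _ _) (le_trans (min_le_right _ _)
      (le_trans (min_le_right _ _) (le_trans (min_le_right _ _)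
        (le_trans (min_le_right _ _) (min_le_left _ _)))))
    have c6 : δ' ≤ δ₅ := le_trans (min_le_right _ _) (le_trans (min_le_right _ _)
      (le_trans (min_le_right _ _) (le_trans (min_le_right _ _)
        (le_trans (min_le_right _ _) (le_trans (min_le_right _ _) (min_le_left _ _))))))
    have c7 : δ' ≤ δ₆ := le_trans (min_le_right _ _) (le_trans (min_le_right _ _)
      (le_trans (min_le_right _ _) (le_trans (min_le_right _ _)
        (le_trans (min_le_right _ _) (le_trans (min_le_right _ _)
          (le_trans (min_le_right _ _) (min_le_left _ _)))))))
    have c8 : δ' ≤ δ₇ := le_trans c9 (min_le_left _ _)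
    have c10 : δ' ≤ ε₀ := le_trans c9 (min_le_right _ _)
    have hδ'0 : 0 < δ' := by
      rw [hδ'def]
      exact lt_min hδ₀ (lt_min hξ0 (lt_min hδ₁ (lt_min hδ₁' (lt_min hδ₃ (lt_min hδ₄
        (lt_min hδ₅ (lt_min hδ₆ (lt_min hδ₇ hε₀))))))))
    -- domain facts
    have d1 : -ε₀ ≤ s - δ' := by linarith
    have d2 : -ε₀ ≤ t - δ' := by linarith
    have d3 : (0:ℝ) ≤ t - δ' := by linarith
    have hrect : M s t = F (s-δ') (t-δ') - F (s+δ') (t-δ') - F (s-δ') (t+δ') + F (s+δ') (t+δ') :=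
      hMst δ' hδ'0 c0
    -- Term 1
    have T1 : F (s-δ') (t-δ') = L := by
      have hge : F s (t-δ') ≤ F (s-δ') (t-δ') := Fmono_s (s-δ') s (t-δ') d1 (by linarith) d2
      have hle : F (s-δ') (t-δ') ≤ F (s-δ') (t-ξ) := Fmono_t (s-δ') (t-ξ) (t-δ') d1 htξε
        (by linarith)
      have e1 : F s (t-δ') = L := hL δ' hδ'0 (le_trans c1 (min_le_left _ _))
      have e2 : F (s-δ') (t-ξ) = F s (t-ξ) := hFlcξ δ' hδ'0 c5
      omega
    -- Term 2
    have T2 : F (s+δ') (t-δ') = L' := by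
      have hle : F (s+δ') (t-δ') ≤ Fp s (t-δ') := Fp_ge s (t-δ') δ' hsε d2 hδ'0
      have e1 : Fp s (t-δ') = L' := hL' δ' hδ'0 (le_trans c1 (min_le_right _ _))
      have e2 : F (s+δ') (t-ξ) = L' := by rw [hFattξ δ' hδ'0 c6, hL'ξ]
      have e3 : F s (t-δ') = L := hL δ' hδ'0 (le_trans c1 (min_le_left _ _))
      have hj := Fjump s (s+δ') (t-ξ) (t-δ') hsε (by linarith) htξε (by linarith)
      omega
    -- Term 3
    have T3 : F (s-δ') (t+δ') = F s t := by
      have hle : F (s-δ') (t+δ') ≤ F (s-δ') t := Fmono_t (s-δ') t (t+δ') d1 htε (by linarith)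
      have e1 : F (s-δ') t = F s t := hFlct δ' hδ'0 c4
      have hge : F s (t+δ') ≤ F (s-δ') (t+δ') := Fmono_s (s-δ') s (t+δ') d1 (by linarith)
        (by linarith)
      have e2 : F s (t+δ') = F s t := hFrct δ' hδ'0 c2
      omega
    -- Term 4
    have T4 : F (s+δ') (t+δ') = Fp s t := by
      have hle : F (s+δ') (t+δ') ≤ Fp s (t+δ') := Fp_ge s (t+δ') δ' hsε (by linarith) hδ'0
      have e1 : Fp s (t+δ') = Fp s t := hFprct δ' hδ'0 c3
      have hge : F (s+δ₆) (t+δ') ≤ F (s+δ') (t+δ') := Fmono_s (s+δ') (s+δ₆) (t+δ')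
        (by linarith) (by linarith) (by linarith)
      have e2 : F (s+δ₆) (t+δ') = F (s+δ₆) t := hFrc6 δ' hδ'0 c8
      have e3 : F (s+δ₆) t = Fp s t := hFattt δ₆ hδ₆ le_rfl
      omega
    refine ⟨ξ, hξ0, by linarith, fun η h1 h2 => ?_⟩
    have e1 : F s (t-η) = L := hL η h1 (le_trans h2 (min_le_left _ _))
    have e2 : Fp s (t-η) = L' := hL' η h1 (le_trans h2 (min_le_right _ _))
    rw [hrect, T1, T2, T3, T4, e1, e2]
    ring
  -- the value formula for MIf
  have minf : ∀ s, 0 ≤ s → MIf s = F s T - Fp s T := by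
    intro s hs
    have hsε : -ε₀ ≤ s := by linarith
    have hTε : -ε₀ ≤ T := by linarith
    obtain ⟨δ₀, hδ₀, hval⟩ := hMI s hs
    obtain ⟨δa, hδa, hlc⟩ := Flc s T hsε hTε
    obtain ⟨δb, hδb, hatt⟩ := Fp_att s T hsε hTε
    set δ := min δ₀ (min δa δb) with hδdef
    have h0 : 0 < δ := lt_min hδ₀ (lt_min hδa hδb)
    have e0 : MIf s = F (s-δ) T - F (s+δ) T := hval δ h0 (min_le_left _ _)
    have e1 : F (s-δ) T = F s T := hlc δ h0 (le_trans (min_le_right _ _) (min_le_left _ _))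
    have e2 : F (s+δ) T = Fp s T := hatt δ h0 (le_trans (min_le_right _ _) (min_le_right _ _))
    rw [e0, e1, e2]
  -- jumpB application along the s-axis at height 0
  have gB_anti : ∀ s s', 0 ≤ s → s ≤ s' → F s' 0 ≤ F s 0 := fun s s' hs hss =>
    Fmono_s s s' 0 (by linarith) hss (by linarith)
  have gB_lc : ∀ s, 0 < s → ∃ δ > (0:ℝ), δ < s ∧ ∀ η, 0 < η → η ≤ δ → F (s-η) 0 = F s 0 := by
    intro s hs
    obtain ⟨δ, hδ, hlc⟩ := Flc s 0 (by linarith) (by linarith)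
    refine ⟨min δ (s/2), lt_min hδ (by linarith), by
      have := min_le_right δ (s/2); linarith, fun η h1 h2 => ?_⟩
    exact hlc η h1 (le_trans h2 (min_le_left _ _))
  have gB_j : ∀ s, 0 ≤ s → ∃ δ > (0:ℝ), ∀ η, 0 < η → η ≤ δ →
      (F s 0 - Fp s 0) = F s 0 - F (s+η) 0 := by
    intro s hs
    obtain ⟨δ, hδ, hatt⟩ := Fp_att s 0 (by linarith) (by linarith)
    exact ⟨δ, hδ, fun η h1 h2 => by rw [hatt η h1 h2]⟩
  have gB_const : ∀ s, S ≤ s → F s 0 = F S 0 := fun s hs => by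
    rw [Fvanish s 0 hs (by linarith), Fvanish S 0 le_rfl (by linarith)]
  obtain ⟨ΦB, hcovB, hmemB, hsumB⟩ := jumpB (fun s => F s 0) (fun s => F s 0 - Fp s 0) S hS
    gB_anti gB_lc gB_j gB_const
  have FS0 : F S 0 = 0 := Fvanish S 0 le_rfl (by linarith)
  -- jumpA applications along the t-axis, for each s ≥ 0
  have EA : ∀ s : ℝ, ∃ Φ : Finset ℝ, 0 ≤ s →
      ((∀ t, 0 < t → M s t ≠ 0 → t ∈ Φ) ∧ (∀ t ∈ Φ, 0 < t ∧ M s t ≠ 0) ∧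
        Φ.sum (fun t => M s t) = (F s 0 - Fp s 0) - (F s T - Fp s T)) := by
    intro s
    by_cases hs : 0 ≤ s
    · obtain ⟨Φ, hΦ⟩ := jumpA (fun t => F s t - Fp s t) (fun t => M s t) T hT
        (fun t t' ht htt => h_anti s t t' hs (by linarith) htt)
        (fun t ht => h_rc s t hs (by linarith))
        (fun t ht => mjump s t hs ht)
        (fun t ht => h_stab s t hs ht)
      exact ⟨Φ, fun _ => hΦ⟩
    · exact ⟨∅, fun h => absurd h hs⟩
  choose ΦA hΦA using EA
  -- support keys
  have key1 : ∀ s t, 0 ≤ s → 0 < t → M s t ≠ 0 → F s 0 - Fp s 0 ≠ 0 := by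
    intro s t hs ht hne
    obtain ⟨δ, hδ, hδt, hval⟩ := mjump s t hs ht
    have e := hval δ hδ le_rfl
    have h1 : F s t - Fp s t ≤ F s (t-δ) - Fp s (t-δ) :=
      h_anti s (t-δ) t hs (by linarith) (by linarith)
    have h2 : 0 ≤ F s t - Fp s t := h_nonneg s t hs (by linarith)
    have h3 : F s (t-δ) - Fp s (t-δ) ≤ F s 0 - Fp s 0 :=
      h_anti s 0 (t-δ) hs (by linarith) (by linarith)
    omega
  have key2 : ∀ s, 0 ≤ s → MIf s ≠ 0 → F s 0 - Fp s 0 ≠ 0 := by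
    intro s hs hne
    have e := minf s hs
    have h1 : F s T - Fp s T ≤ F s 0 - Fp s 0 := h_anti s 0 T hs (by linarith) hT
    have h2 : 0 ≤ F s T - Fp s T := h_nonneg s T hs (by linarith)
    omega
  set Φ₂ : Finset (ℝ × ℝ) := ΦB.biUnion (fun s => (ΦA s).image (fun t => (s, t))) with hΦ₂def
  have hΦ₂mem : ∀ s t : ℝ, (s, t) ∈ Φ₂ ↔ s ∈ ΦB ∧ t ∈ ΦA s := by
    intro s t
    rw [hΦ₂def, Finset.mem_biUnion]
    constructor
    · rintro ⟨s', hs', hmem⟩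
      obtain ⟨t', ht', heq⟩ := Finset.mem_image.mp hmem
      obtain ⟨h1, h2⟩ := Prod.mk.inj heq
      subst h1; subst h2
      exact ⟨hs', ht'⟩
    · rintro ⟨h1, h2⟩
      exact ⟨s, h1, Finset.mem_image.mpr ⟨t, h2, rfl⟩⟩
  have hsub1 : {p : ℝ × ℝ | 0 ≤ p.1 ∧ 0 < p.2 ∧ M p.1 p.2 ≠ 0} ⊆ ↑Φ₂ := by
    rintro ⟨s, t⟩ ⟨hs, ht, hne⟩
    have hsB : s ∈ ΦB := hcovB s hs (key1 s t hs ht hne)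
    have htA : t ∈ ΦA s := ((hΦA s hs).1) t ht hne
    exact Finset.mem_coe.mpr ((hΦ₂mem s t).mpr ⟨hsB, htA⟩)
  have fin1 : {p : ℝ × ℝ | 0 ≤ p.1 ∧ 0 < p.2 ∧ M p.1 p.2 ≠ 0}.Finite :=
    Set.Finite.subset Φ₂.finite_toSet hsub1
  have hsub2 : {s : ℝ | 0 ≤ s ∧ MIf s ≠ 0} ⊆ ↑ΦB := by
    rintro s ⟨hs, hne⟩
    exact Finset.mem_coe.mpr (hcovB s hs (key2 s hs hne))
  have fin2 : {s : ℝ | 0 ≤ s ∧ MIf s ≠ 0}.Finite := Set.Finite.subset ΦB.finite_toSet hsub2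
  -- computing the finsums
  have hsupp1 : {p : ℝ × ℝ | 0 ≤ p.1 ∧ 0 < p.2} ∩
      Function.support (fun p : ℝ × ℝ => M p.1 p.2) =
      ↑Φ₂ ∩ Function.support (fun p : ℝ × ℝ => M p.1 p.2) := by
    ext ⟨s, t⟩
    simp only [Set.mem_inter_iff, Set.mem_setOf_eq, Function.mem_support, Finset.mem_coe]
    constructor
    · rintro ⟨⟨hs, ht⟩, hne⟩
      exact ⟨(hΦ₂mem s t).mpr ⟨hcovB s hs (key1 s t hs ht hne), ((hΦA s hs).1) t ht hne⟩, hne⟩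
    · rintro ⟨hmem, hne⟩
      obtain ⟨h1, h2⟩ := (hΦ₂mem s t).mp hmem
      have hs : 0 ≤ s := (hmemB s h1).1
      have ht : 0 < t := ((hΦA s hs).2.1 t h2).1
      exact ⟨⟨hs, ht⟩, hne⟩
  have sum1 : (∑ᶠ p ∈ {p : ℝ × ℝ | 0 ≤ p.1 ∧ 0 < p.2}, M p.1 p.2) =
      ∑ p ∈ Φ₂, M p.1 p.2 :=
    finsum_mem_eq_sum_of_inter_support_eq _ hsupp1
  have hsupp2 : {s : ℝ | 0 ≤ s} ∩ Function.support MIf = ↑ΦB ∩ Function.support MIf := by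
    ext s
    simp only [Set.mem_inter_iff, Set.mem_setOf_eq, Function.mem_support, Finset.mem_coe]
    constructor
    · rintro ⟨hs, hne⟩
      exact ⟨hcovB s hs (key2 s hs hne), hne⟩
    · rintro ⟨hmem, hne⟩
      exact ⟨(hmemB s hmem).1, hne⟩
  have sum2 : (∑ᶠ s ∈ {s : ℝ | 0 ≤ s}, MIf s) = ∑ s ∈ ΦB, MIf s :=
    finsum_mem_eq_sum_of_inter_support_eq _ hsupp2
  have hdisj : (↑ΦB : Set ℝ).PairwiseDisjoint (fun s => (ΦA s).image (fun t => (s, t))) := by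
    intro s₁ _ s₂ _ hne
    rw [Function.onFun]
    apply Finset.disjoint_left.mpr
    rintro p hp₁ hp₂
    obtain ⟨t₁, _, he₁⟩ := Finset.mem_image.mp hp₁
    obtain ⟨t₂, _, he₂⟩ := Finset.mem_image.mp hp₂
    apply hne
    rw [← he₁] at he₂
    exact (Prod.mk.inj he₂).1.symm
  have sumbi : (∑ p ∈ Φ₂, M p.1 p.2) = ∑ s ∈ ΦB, ∑ t ∈ ΦA s, M s t := by
    rw [hΦ₂def, Finset.sum_biUnion hdisj]
    refine Finset.sum_congr rfl (fun s _ => ?_)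
    rw [Finset.sum_image (fun t _ t' _ h => (Prod.mk.inj h).2)]
  have total : (∑ s ∈ ΦB, ∑ t ∈ ΦA s, M s t) + (∑ s ∈ ΦB, MIf s) = F 0 0 := by
    have e1 : ∀ s ∈ ΦB, (∑ t ∈ ΦA s, M s t) + MIf s = F s 0 - Fp s 0 := by
      intro s hs
      have h0s : 0 ≤ s := (hmemB s hs).1
      rw [(hΦA s h0s).2.2, minf s h0s]
      ring
    rw [← Finset.sum_add_distrib, Finset.sum_congr rfl e1, hsumB, FS0]
    ring
  refine ⟨fin1, fin2, ?_⟩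
  rw [sum1, sum2, sumbi, total]

end Abstract

/-- Multidimensional Representation Theorem: `β(ū,v̄)` is the sum of the multiplicities
of the points `(ū − s·e, v̄ + t·e)`, `s ≥ 0 < t`, plus the multiplicities at infinity of the
points `ū − s·e`, `s ≥ 0`. -/
theorem representation_theorem
    (n : ℕ) (β : (Fin n → ℝ) × (Fin n → ℝ) → ℕ) (hβa : Admissible β) (hβt : Tame β)
    (ubar vbar : Fin n → ℝ) (h : vlt ubar vbar) (e : Fin n → ℝ) (he : vlt 0 e) :
    {p : ℝ × ℝ | 0 ≤ p.1 ∧ 0 < p.2 ∧ mult β (ubar - p.1 • e) (vbar + p.2 • e) ≠ 0}.Finite ∧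
    {s : ℝ | 0 ≤ s ∧ multInf β (ubar - s • e) ≠ 0}.Finite ∧
    (β (ubar, vbar) : ℤ) =
      (∑ᶠ p ∈ {p : ℝ × ℝ | 0 ≤ p.1 ∧ 0 < p.2}, mult β (ubar - p.1 • e) (vbar + p.2 • e)) +
      ∑ᶠ s ∈ {s : ℝ | 0 ≤ s}, multInf β (ubar - s • e) := by
  classical
  obtain ⟨hMo, hJ, hR⟩ := hβa
  obtain ⟨C, hC, hbound, hvanish⟩ := hβt
  have he' : ∀ i, 0 < e i := fun i => by simpa using he i
  have h' : ∀ i, ubar i < vbar i := fun i => h i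
  -- choose ε₀
  obtain ⟨ε₀, hε₀, hεs⟩ := exists_scale e (fun i => (vbar i - ubar i)/4) he
    (by intro i; simp only [Pi.zero_apply]; linarith [h' i])
  have hdom : ∀ s t : ℝ, -ε₀ ≤ s → -ε₀ ≤ t → vlt (ubar - s • e) (vbar + t • e) := by
    intro s t hs ht i
    simp only [Pi.sub_apply, Pi.add_apply, Pi.smul_apply, smul_eq_mul]
    have h4 : ε₀ * e i ≤ (vbar i - ubar i)/4 := hεs ε₀ hε₀ le_rfl i
    have h5 : (-s) * e i ≤ ε₀ * e i :=
      mul_le_mul_of_nonneg_right (by linarith) (he' i).le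
    have h6 : (-t) * e i ≤ ε₀ * e i :=
      mul_le_mul_of_nonneg_right (by linarith) (he' i).le
    nlinarith [h' i]
  -- choose S
  obtain ⟨S₀, hS₀⟩ := exists_ub (fun i => (ubar i + C) / e i)
  set S := max S₀ 0 with hSdef
  have hS : (0:ℝ) ≤ S := le_max_right _ _
  have hSv : ∀ s : ℝ, S ≤ s → ∀ i, ubar i - s * e i ≤ -C := by
    intro s hs i
    have h1 : (ubar i + C) / e i ≤ s := le_trans (hS₀ i) (le_trans (le_max_left _ _) hs)
    rw [div_le_iff₀ (he' i)] at h1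
    linarith
  -- choose T
  obtain ⟨T₀, hT₀⟩ := exists_ub (fun i => (C - vbar i) / e i)
  set T := max T₀ 0 with hTdef
  have hT : (0:ℝ) ≤ T := le_max_right _ _
  have hTv : ∀ t : ℝ, T ≤ t → ∀ i, C ≤ vbar i + t * e i := by
    intro t ht i
    have h1 : (C - vbar i) / e i ≤ t := le_trans (hT₀ i) (le_trans (le_max_left _ _) ht)
    rw [div_le_iff₀ (he' i)] at h1
    linarith
  -- the slice function
  set Fb : ℝ → ℝ → ℤ := fun s t => (β (ubar - s • e, vbar + t • e) : ℤ) with hFb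
  have hFbs : ∀ s t : ℝ, Fb s t = (β (ubar - s • e, vbar + t • e) : ℤ) := fun _ _ => rfl
  -- vector identities
  have vid1 : ∀ s δ : ℝ, ubar - s • e + δ • e = ubar - (s - δ) • e := by
    intro s δ; rw [sub_smul]; abel
  have vid2 : ∀ s δ : ℝ, ubar - s • e - δ • e = ubar - (s + δ) • e := by
    intro s δ; rw [add_smul]; abel
  have vid3 : ∀ t δ : ℝ, vbar + t • e - δ • e = vbar + (t - δ) • e := by
    intro t δ; rw [sub_smul]; abel
  have vid4 : ∀ t δ : ℝ, vbar + t • e + δ • e = vbar + (t + δ) • e := by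
    intro t δ; rw [add_smul]; abel
  have hsm : ∀ s s' : ℝ, s ≤ s' → vle (ubar - s' • e) (ubar - s • e) := by
    intro s s' hss i
    simp only [Pi.sub_apply, Pi.smul_apply, smul_eq_mul]
    nlinarith [mul_le_mul_of_nonneg_right hss (he' i).le]
  have htm : ∀ t t' : ℝ, t ≤ t' → vle (vbar + t • e) (vbar + t' • e) := by
    intro t t' htt i
    simp only [Pi.add_apply, Pi.smul_apply, smul_eq_mul]
    nlinarith [mul_le_mul_of_nonneg_right htt (he' i).le]
  -- hypotheses of the abstract theorem
  have Fmono_s : ∀ s s' t : ℝ, -ε₀ ≤ s → s ≤ s' → -ε₀ ≤ t → Fb s' t ≤ Fb s t := by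
    intro s s' t hs hss ht
    rw [hFbs, hFbs]
    exact_mod_cast hMo.1 (ubar - s' • e) (ubar - s • e) (vbar + t • e)
      (hsm s s' hss) (hdom s t hs ht)
  have Fmono_t : ∀ s t t' : ℝ, -ε₀ ≤ s → -ε₀ ≤ t → t ≤ t' → Fb s t' ≤ Fb s t := by
    intro s t t' hs ht htt
    rw [hFbs, hFbs]
    exact_mod_cast hMo.2 (ubar - s • e) (vbar + t • e) (vbar + t' • e)
      (hdom s t hs ht) (htm t t' htt)
  have Fjump : ∀ s s' t t' : ℝ, -ε₀ ≤ s → s ≤ s' → -ε₀ ≤ t → t ≤ t' →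
      Fb s t' - Fb s' t' ≤ Fb s t - Fb s' t := by
    intro s s' t t' hs hss ht htt
    rw [hFbs, hFbs, hFbs, hFbs]
    exact hJ (ubar - s' • e) (ubar - s • e) (vbar + t • e) (vbar + t' • e)
      (hsm s s' hss) (hdom s t hs ht) (htm t t' htt)
  have normbound : ∀ δ η : ℝ, 0 < δ → 0 < η → η ≤ δ / (2 * (‖e‖ + 1)) → ‖η • e‖ < δ := by
    intro δ η hδ hη hle
    rw [norm_smul, Real.norm_eq_abs, abs_of_pos hη]
    have he0 : (0:ℝ) ≤ ‖e‖ := norm_nonneg e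
    have h1 : η * ‖e‖ ≤ (δ / (2 * (‖e‖ + 1))) * (‖e‖ + 1) := by
      apply mul_le_mul hle (by linarith) he0 (by positivity)
    have h2 : (δ / (2 * (‖e‖ + 1))) * (‖e‖ + 1) = δ / 2 := by field_simp
    linarith
  have Flc : ∀ s t : ℝ, -ε₀ ≤ s → -ε₀ ≤ t →
      ∃ δ > (0:ℝ), ∀ η, 0 < η → η ≤ δ → Fb (s-η) t = Fb s t := by
    intro s t hs ht
    obtain ⟨δ, hδ, h1, _⟩ := hR (ubar - s • e) (vbar + t • e) (hdom s t hs ht)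
    refine ⟨δ / (2 * (‖e‖ + 1)), by positivity, fun η hη hle => ?_⟩
    have hveq : ubar - (s - η) • e = (ubar - s • e) + η • e := (vid1 s η).symm
    have hsub : (ubar - s • e) + η • e - (ubar - s • e) = η • e := by abel
    have := h1 ((ubar - s • e) + η • e)
      (by intro i; simp only [Pi.add_apply, Pi.smul_apply, smul_eq_mul]
          nlinarith [mul_pos hη (he' i)])
      (by rw [hsub]; exact normbound δ η hδ hη hle)
    rw [hFbs, hFbs, hveq]
    exact_mod_cast this
  have Frc : ∀ s t : ℝ, -ε₀ ≤ s → -ε₀ ≤ t →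
      ∃ δ > (0:ℝ), ∀ η, 0 < η → η ≤ δ → Fb s (t+η) = Fb s t := by
    intro s t hs ht
    obtain ⟨δ, hδ, _, h2⟩ := hR (ubar - s • e) (vbar + t • e) (hdom s t hs ht)
    refine ⟨δ / (2 * (‖e‖ + 1)), by positivity, fun η hη hle => ?_⟩
    have hveq : vbar + (t + η) • e = (vbar + t • e) + η • e := (vid4 t η).symm
    have hsub : (vbar + t • e) + η • e - (vbar + t • e) = η • e := by abel
    have := h2 ((vbar + t • e) + η • e)
      (by intro i; simp only [Pi.add_apply, Pi.smul_apply, smul_eq_mul]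
          nlinarith [mul_pos hη (he' i)])
      (by rw [hsub]; exact normbound δ η hδ hη hle)
    rw [hFbs, hFbs, hveq]
    exact_mod_cast this
  have Fvanish : ∀ s t : ℝ, S ≤ s → -ε₀ ≤ t → Fb s t = 0 := by
    intro s t hs ht
    have := hvanish (ubar - s • e) (vbar + t • e)
      (hdom s t (by linarith) ht)
      (by intro i; simp only [Pi.sub_apply, Pi.smul_apply, smul_eq_mul]; exact hSv s hs i)
    rw [hFbs]
    exact_mod_cast this
  have Fstab : ∀ s t : ℝ, -ε₀ ≤ s → T ≤ t → Fb s t = Fb s T := by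
    intro s t hs ht
    have := hbound (ubar - s • e) (vbar + t • e) (vbar + T • e)
      (hdom s t hs (by linarith)) (hdom s T hs (by linarith))
      (by intro i; simp only [Pi.add_apply, Pi.smul_apply, smul_eq_mul]; exact hTv t ht i)
      (by intro i; simp only [Pi.add_apply, Pi.smul_apply, smul_eq_mul]; exact hTv T le_rfl i)
    rw [hFbs, hFbs]
    exact_mod_cast this
  have hMc : ∀ s t : ℝ, 0 ≤ s → 0 < t → ∃ δ₀ > (0:ℝ), ∀ δ, 0 < δ → δ ≤ δ₀ →
      mult β (ubar - s • e) (vbar + t • e) =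
        Fb (s-δ) (t-δ) - Fb (s+δ) (t-δ) - Fb (s-δ) (t+δ) + Fb (s+δ) (t+δ) := by
    intro s t hs ht
    obtain ⟨δ₀, hδ₀, _, hval⟩ := mult_eq_muE β ⟨hMo, hJ, hR⟩ e
      (hdom s t (by linarith) (by linarith)) he
    refine ⟨δ₀, hδ₀, fun δ h1 h2 => ?_⟩
    rw [hval δ h1 h2, hFbs, hFbs, hFbs, hFbs]
    show (β (ubar - s • e + δ • e, vbar + t • e - δ • e) : ℤ)
        - β (ubar - s • e - δ • e, vbar + t • e - δ • e)
        - β (ubar - s • e + δ • e, vbar + t • e + δ • e)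
        + β (ubar - s • e - δ • e, vbar + t • e + δ • e) = _
    rw [vid1, vid2, vid3, vid4]
  have hVc : ∀ i, C ≤ (vbar + T • e) i := by
    intro i; simp only [Pi.add_apply, Pi.smul_apply, smul_eq_mul]; exact hTv T le_rfl i
  have hMIc : ∀ s : ℝ, 0 ≤ s → ∃ δ₀ > (0:ℝ), ∀ δ, 0 < δ → δ ≤ δ₀ →
      multInf β (ubar - s • e) = Fb (s-δ) T - Fb (s+δ) T := by
    intro s hs
    obtain ⟨δ₀, hδ₀, _, hval⟩ := multInf_eq_muInfE β ⟨hMo, hJ, hR⟩ hbound e he hVc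
      (hdom s T (by linarith) (by linarith))
    refine ⟨δ₀, hδ₀, fun δ h1 h2 => ?_⟩
    rw [hval δ h1 h2, hFbs, hFbs]
    show (β (ubar - s • e + δ • e, vbar + T • e) : ℤ)
        - β (ubar - s • e - δ • e, vbar + T • e) = _
    rw [vid1, vid2]
  have main := abstract_main Fb
    (fun s t => mult β (ubar - s • e) (vbar + t • e))
    (fun s => multInf β (ubar - s • e)) ε₀ S T hε₀ hS hT
    Fmono_s Fmono_t Fjump Flc Frc Fvanish Fstab hMc hMIc
  have e00 : Fb 0 0 = (β (ubar, vbar) : ℤ) := by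
    rw [hFbs]
    norm_num
  refine ⟨main.1, main.2.1, ?_⟩
  rw [← e00]
  exact main.2.2
end PersistSpace
end

section
/- Let β : ℝⁿ×ℝⁿ → ℕ be admissible and tame, and let (ū,v̄) ∈ D_n⁺ be a proper cornerpoint of β, i.e. μ(ū,v̄) > 0. Then: (i) ū is a discontinuity point of β(·,v̂) for every v̂ with ū ≺ v̂ ≺ v̄; (ii) v̄ is a discontinuity point of β(û,·) for every û with ū ≼ û ≺ v̄. -/
namespace PersistSpace

variable {n : ℕ}

private lemma exists_eps {n : ℕ} (δ : ℝ) (hδ : 0 < δ) (f : Fin n → ℝ) (hf : ∀ i, 0 < f i) :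
    ∃ ε : ℝ, 0 < ε ∧ ε < δ ∧ ∀ i, ε < f i := by
  have h0 : ∀ᶠ ε in nhdsWithin (0:ℝ) (Set.Ioi 0), 0 < ε :=
    Filter.eventually_of_mem self_mem_nhdsWithin (fun x hx => hx)
  have h1 : ∀ᶠ ε in nhdsWithin (0:ℝ) (Set.Ioi 0), ε < δ :=
    Filter.eventually_of_mem (Ioo_mem_nhdsGT_of_mem ⟨le_rfl, hδ⟩) (fun x hx => hx.2)
  have h2 : ∀ᶠ ε in nhdsWithin (0:ℝ) (Set.Ioi 0), ∀ i, ε < f i :=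
    Filter.eventually_all.mpr fun i =>
      Filter.eventually_of_mem (Ioo_mem_nhdsGT_of_mem ⟨le_rfl, hf i⟩) (fun x hx => hx.2)
  obtain ⟨ε, hε0, hε1, hε2⟩ := (h0.and (h1.and h2)).exists
  exact ⟨ε, hε0, hε1, hε2⟩

private lemma mult_le_muE {n : ℕ} {β : (Fin n → ℝ) × (Fin n → ℝ) → ℕ} (hJ : JumpMonot β)
    {u v e : Fin n → ℝ} (he : vlt 0 e) (hev : vlt (u + e) (v - e)) :
    mult β u v ≤ muE β e u v := by
  apply csInf_le
  · refine ⟨0, ?_⟩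
    rintro m ⟨e', he', hev', rfl⟩
    have hz : ∀ i, 0 < e' i := fun i => by
      have := he' i
      simpa using this
    have h1 := hJ (u - e') (u + e') (v - e') (v + e')
      (fun i => by
        simp only [Pi.add_apply, Pi.sub_apply]
        have := hz i
        linarith)
      hev'
      (fun i => by
        simp only [Pi.add_apply, Pi.sub_apply]
        have := hz i
        linarith)
    unfold muE
    linarith
  · exact ⟨e, he, hev, rfl⟩

private lemma norm_const_le {n : ℕ} {ε : ℝ} (hε : 0 ≤ ε) :
    ‖(fun _ : Fin n => ε)‖ ≤ ε := by
  refine (pi_norm_le_iff_of_nonneg hε).mpr fun i => ?_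
  simp [Real.norm_eq_abs, abs_of_nonneg hε]

/-- Proposition 3.13: discontinuities propagate from a proper cornerpoint. -/
theorem proper_cornerpoint_gives_discontinuities
    (n : ℕ) (β : (Fin n → ℝ) × (Fin n → ℝ) → ℕ) (hβa : Admissible β) (hβt : Tame β)
    (ubar vbar : Fin n → ℝ) (h : vlt ubar vbar) (hcp : 0 < mult β ubar vbar) :
    (∀ vhat : Fin n → ℝ, vlt ubar vhat → vlt vhat vbar → DiscontAt1 β vhat ubar) ∧
    (∀ uhat : Fin n → ℝ, vle ubar uhat → vlt uhat vbar → DiscontAt2 β uhat vbar) := by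
  obtain ⟨hM, hJ, hRC⟩ := hβa
  constructor
  · -- Part (i)
    intro vhat h1 h2 hcont
    have hsing : ∀ᶠ y in nhds (β (ubar, vhat)), y = β (ubar, vhat) := by
      rw [nhds_discrete ℕ]; exact Filter.eventually_pure.mpr rfl
    have hev := hcont.eventually hsing
    obtain ⟨δ, hδ, hball⟩ := Metric.mem_nhdsWithin_iff.mp hev
    obtain ⟨ε, hε0, hεδ, hεf⟩ := exists_eps δ hδ
      (fun i => min (vhat i - ubar i) (vbar i - vhat i))
      (fun i => lt_min (by linarith [h1 i]) (by linarith [h2 i]))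
    set e : Fin n → ℝ := fun _ => ε with he_def
    have hεu : ∀ i, ε < vhat i - ubar i := fun i => (hεf i).trans_le (min_le_left _ _)
    have hεv : ∀ i, ε < vbar i - vhat i := fun i => (hεf i).trans_le (min_le_right _ _)
    have h3 : vlt (ubar + e) vhat := fun i => by
      simp only [Pi.add_apply]; have := hεu i; simp only [he_def]; linarith
    have h4 : vle vhat (vbar - e) := fun i => by
      simp only [Pi.sub_apply]; have := hεv i; simp only [he_def]; linarith
    have hne : ‖e‖ ≤ ε := norm_const_le hε0.le
    have hA : β (ubar + e, vhat) = β (ubar, vhat) := by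
      apply hball
      refine ⟨?_, h3⟩
      simp only [Metric.mem_ball, dist_eq_norm, add_sub_cancel_left]
      exact lt_of_le_of_lt hne hεδ
    have hA' : β (ubar - e, vhat) = β (ubar, vhat) := by
      apply hball
      refine ⟨?_, fun i => by
        simp only [Pi.sub_apply]; have := h1 i; simp only [he_def]; linarith⟩
      have : ubar - e - ubar = -e := by ring
      simp only [Metric.mem_ball, dist_eq_norm, this, norm_neg]
      exact lt_of_le_of_lt hne hεδ
    have hjump := hJ (ubar - e) (ubar + e) vhat (vbar - e)
      (fun i => by simp only [Pi.add_apply, Pi.sub_apply, he_def]; linarith)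
      h3 h4
    rw [hA, hA'] at hjump
    have hB : β (ubar - e, vbar + e) ≤ β (ubar + e, vbar + e) :=
      hM.1 (ubar - e) (ubar + e) (vbar + e)
        (fun i => by simp only [Pi.add_apply, Pi.sub_apply, he_def]; linarith)
        (fun i => by simp only [Pi.add_apply, he_def]; have := h i; linarith)
    have hB' : (β (ubar - e, vbar + e) : ℤ) ≤ β (ubar + e, vbar + e) := by exact_mod_cast hB
    have hevlt : vlt (ubar + e) (vbar - e) := fun i => lt_of_lt_of_le (h3 i) (h4 i)
    have hle := mult_le_muE hJ (fun i => by simp only [Pi.zero_apply, he_def]; exact hε0) hevlt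
    unfold muE at hle
    linarith
  · -- Part (ii)
    intro uhat h1 h2 hcont
    have hsing : ∀ᶠ y in nhds (β (uhat, vbar)), y = β (uhat, vbar) := by
      rw [nhds_discrete ℕ]; exact Filter.eventually_pure.mpr rfl
    have hev := hcont.eventually hsing
    obtain ⟨δ0, hδ0, hball⟩ := Metric.mem_nhdsWithin_iff.mp hev
    set w : Fin n → ℝ := fun i => (uhat i + vbar i) / 2 with hw_def
    have hw1 : vlt uhat w := fun i => by simp only [hw_def]; have := h2 i; linarith
    obtain ⟨δ1, hδ1, hRC1, _⟩ := hRC uhat w hw1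
    obtain ⟨ε, hε0, hεδ, hεf⟩ := exists_eps (min δ0 δ1) (lt_min hδ0 hδ1)
      (fun i => min ((vbar i - ubar i) / 2) ((vbar i - uhat i) / 2))
      (fun i => lt_min (by linarith [h i]) (by linarith [h2 i]))
    have hεδ0 : ε < δ0 := lt_of_lt_of_le hεδ (min_le_left _ _)
    have hεδ1 : ε < δ1 := lt_of_lt_of_le hεδ (min_le_right _ _)
    have hεu : ∀ i, ε < (vbar i - ubar i) / 2 := fun i => (hεf i).trans_le (min_le_left _ _)
    have hεv : ∀ i, ε < (vbar i - uhat i) / 2 := fun i => (hεf i).trans_le (min_le_right _ _)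
    set e : Fin n → ℝ := fun _ => ε with he_def
    have hne : ‖e‖ ≤ ε := norm_const_le hε0.le
    set u' : Fin n → ℝ := fun i => max (uhat i) (ubar i + ε) with hu'_def
    have hu'1 : vle uhat u' := fun i => le_max_left _ _
    have hu'2 : ∀ i, u' i ≤ uhat i + ε := fun i =>
      max_le (by linarith [hε0]) (by linarith [h1 i])
    have hu'w : vlt u' w := fun i => by
      have := hεv i; have := hu'2 i; simp only [hw_def]; linarith
    have hwv : vle w (vbar - e) := fun i => by
      simp only [Pi.sub_apply, hw_def, he_def]; have := hεv i; linarith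
    -- β (u', w) = β (uhat, w)
    have hW : β (u', w) = β (uhat, w) := by
      apply hRC1 u' hu'1
      have : ‖u' - uhat‖ ≤ ε := by
        refine (pi_norm_le_iff_of_nonneg hε0.le).mpr fun i => ?_
        simp only [Pi.sub_apply, Real.norm_eq_abs, abs_le]
        constructor
        · have := hu'1 i; linarith
        · have := hu'2 i; linarith
      exact lt_of_le_of_lt this hεδ1
    -- β (uhat, vbar ± e) = β (uhat, vbar)
    have hC1 : β (uhat, vbar - e) = β (uhat, vbar) := by
      apply hball
      refine ⟨?_, fun i => by
        simp only [Pi.sub_apply, he_def]; have := hεv i; have := h2 i; linarith⟩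
      have : vbar - e - vbar = -e := by ring
      simp only [Metric.mem_ball, dist_eq_norm, this, norm_neg]
      exact lt_of_le_of_lt hne hεδ0
    have hC2 : β (uhat, vbar + e) = β (uhat, vbar) := by
      apply hball
      refine ⟨?_, fun i => by
        simp only [Pi.add_apply, he_def]; have := h2 i; linarith⟩
      simp only [Metric.mem_ball, dist_eq_norm, add_sub_cancel_left]
      exact lt_of_le_of_lt hne hεδ0
    have hu'v : vlt u' (vbar - e) := fun i => lt_of_lt_of_le (hu'w i) (hwv i)
    -- Jump 1
    have hjump1 := hJ (ubar + e) u' (vbar - e) (vbar + e)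
      (fun i => by
        simp only [Pi.add_apply, he_def, hu'_def]; exact le_max_right _ _)
      hu'v
      (fun i => by simp only [Pi.add_apply, Pi.sub_apply, he_def]; linarith)
    -- Jump 2
    have hjump2 := hJ uhat u' w (vbar - e) hu'1 hu'w hwv
    rw [hW] at hjump2
    -- monotonicity in u
    have hmon : β (uhat, vbar + e) ≤ β (u', vbar + e) :=
      hM.1 uhat u' (vbar + e) hu'1
        (fun i => by
          simp only [Pi.add_apply, he_def]
          have := hu'v i; simp only [Pi.sub_apply, he_def] at this; linarith)
    have hmon' : (β (uhat, vbar + e) : ℤ) ≤ β (u', vbar + e) := by exact_mod_cast hmon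
    -- monotonicity in v at ubar - e
    have hBmon : β (ubar - e, vbar + e) ≤ β (ubar - e, vbar - e) :=
      hM.2 (ubar - e) (vbar - e) (vbar + e)
        (fun i => by simp only [Pi.sub_apply, he_def]; have := h i; linarith)
        (fun i => by simp only [Pi.add_apply, Pi.sub_apply, he_def]; linarith)
    have hBmon' : (β (ubar - e, vbar + e) : ℤ) ≤ β (ubar - e, vbar - e) := by
      exact_mod_cast hBmon
    have hC1' : (β (uhat, vbar - e) : ℤ) = β (uhat, vbar) := by exact_mod_cast hC1
    have hC2' : (β (uhat, vbar + e) : ℤ) = β (uhat, vbar) := by exact_mod_cast hC2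
    have hevlt : vlt (ubar + e) (vbar - e) := fun i => by
      simp only [Pi.add_apply, Pi.sub_apply, he_def]; have := hεu i; have := h1 i; linarith
    have hle := mult_le_muE hJ (fun i => by simp only [Pi.zero_apply, he_def]; exact hε0) hevlt
    unfold muE at hle
    linarith
end PersistSpace
end

section
/- Let β : ℝⁿ×ℝⁿ → ℕ be admissible and tame, and let ū ∈ ℝⁿ be a cornerpoint at infinity of β, i.e. μ∞(ū) > 0. Then ū is a discontinuity point of β(·,v̂) for every v̂ with ū ≺ v̂. -/
/-! If `β(·, v̂)` were continuous at `ū`, it would be locally constant there because `ℕ` is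
discrete; then `μ∞_{e,v̂}(ū) = 0` for every small enough `e = (t, …, t) ≻ 0`, which forces
`μ∞(ū) ≤ 0`. -/

namespace PersistSpace

variable {n : ℕ}

open Filter Topology

theorem isOpen_setOf_vlt (v : Fin n → ℝ) : IsOpen {u : Fin n → ℝ | vlt u v} := by
  simp only [vlt, Set.ofPred_forall]
  exact isOpen_iInter_of_finite fun i => isOpen_lt (continuous_apply i) continuous_const

section

variable {β : (Fin n → ℝ) × (Fin n → ℝ) → ℕ}

theorem multInf_nonpos_of_muInfE_nonpos {e v u : Fin n → ℝ}
    (he : vlt 0 e) (huv : vlt (u + e) v) (h : muInfE β e v u ≤ 0) : multInf β u ≤ 0 := by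
  by_cases hb : BddBelow {m : ℤ | ∃ e v : Fin n → ℝ, vlt 0 e ∧ vlt (u + e) v ∧
      m = muInfE β e v u}
  · exact (csInf_le hb ⟨e, v, he, huv, rfl⟩).trans h
  · -- junk value: `sInf` of a set of integers that is not bounded below is `0`
    rw [multInf, Int.csInf_of_not_bddBelow hb]

theorem exists_muInfE_eq_zero_of_continuousWithinAt {u v : Fin n → ℝ} (huv : vlt u v)
    (hβ : ContinuousWithinAt (fun u' => β (u', v)) {u' | vlt u' v} u) :
    ∃ e, vlt 0 e ∧ vlt (u + e) v ∧ muInfE β e v u = 0 := by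
  have hloc : ∀ᶠ u' in 𝓝 u, vlt u' v ∧ β (u', v) = β (u, v) := by
    have hnhds := (isOpen_setOf_vlt v).mem_nhds huv
    have hat := hβ.continuousAt hnhds
    rw [ContinuousAt, nhds_discrete ℕ, tendsto_pure] at hat
    exact Eventually.and hnhds hat
  have hplus : Tendsto (fun t : ℝ => u + Function.const (Fin n) t) (𝓝 0) (𝓝 u) :=
    (continuous_const.add (continuous_pi fun _ => continuous_id)).tendsto' 0 u (by ext; simp)
  have hminus : Tendsto (fun t : ℝ => u - Function.const (Fin n) t) (𝓝 0) (𝓝 u) :=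
    (continuous_const.sub (continuous_pi fun _ => continuous_id)).tendsto' 0 u (by ext; simp)
  obtain ⟨t, ⟨⟨hlt, hplusβ⟩, -, hminusβ⟩, ht⟩ :=
    ((hplus.eventually hloc).and (hminus.eventually hloc)
      |>.filter_mono nhdsWithin_le_nhds |>.and self_mem_nhdsWithin
      : ∀ᶠ t in 𝓝[>] (0 : ℝ), _).exists
  exact ⟨Function.const (Fin n) t, fun _ => ht, hlt, by simp [muInfE, hplusβ, hminusβ]⟩

theorem multInf_nonpos_of_continuousWithinAt {u v : Fin n → ℝ} (huv : vlt u v)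
    (hβ : ContinuousWithinAt (fun u' => β (u', v)) {u' | vlt u' v} u) : multInf β u ≤ 0 :=
  let ⟨_, he, hue, h⟩ := exists_muInfE_eq_zero_of_continuousWithinAt huv hβ
  multInf_nonpos_of_muInfE_nonpos he hue h.le

end

theorem cornerpoint_at_infinity_gives_discontinuities_general
    (n : ℕ) (β : (Fin n → ℝ) × (Fin n → ℝ) → ℕ)
    (ubar : Fin n → ℝ) (hcp : 0 < multInf β ubar) :
    ∀ vhat : Fin n → ℝ, vlt ubar vhat → DiscontAt1 β vhat ubar :=
  fun _ hlt hcont => (multInf_nonpos_of_continuousWithinAt hlt hcont).not_gt hcp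

/-- Proposition 3.14: discontinuities propagate from a cornerpoint at infinity. -/
theorem cornerpoint_at_infinity_gives_discontinuities
    (n : ℕ) (β : (Fin n → ℝ) × (Fin n → ℝ) → ℕ) (hβa : Admissible β) (hβt : Tame β)
    (ubar : Fin n → ℝ) (hcp : 0 < multInf β ubar) :
    ∀ vhat : Fin n → ℝ, vlt ubar vhat → DiscontAt1 β vhat ubar :=
  cornerpoint_at_infinity_gives_discontinuities_general n β ubar hcp

end PersistSpace
end
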